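/- arXiv:2111.05065 — 7 statements merged into one kernel-verified Lean document; each statement's English description precedes it below -/
import Mathlib

section
/- Let E, J, R, Q ∈ ℝ^{n×n} and B ∈ ℝ^{n×m} define a port-Hamiltonian descriptor system (Jᵀ = −J, R = Rᵀ ⪰ 0, EᵀQ = QᵀE ⪰ 0), with A := (J−R)Q and C := BᵀQ, and let S, T ∈ GL(n,ℝ). Define the transformed data Ẽ := SET⁻¹, J̃ := SJSᵀ, R̃ := SRSᵀ, Q̃ := S⁻ᵀQT⁻¹, Ã := (J̃−R̃)Q̃ = SAT⁻¹, B̃ := SB, C̃ := B̃ᵀQ̃ = CT⁻¹. Then 𝒫c and 𝒫f are stabilizing solutions of the control GARE Aᵀ𝒫c + 𝒫cᵀA − 𝒫cᵀBBᵀ𝒫c + CᵀC = 0, Eᵀ𝒫c = 𝒫cᵀE and of the modified filter GARE A𝒫fᵀ + 𝒫fAᵀ − 𝒫fCᵀC𝒫fᵀ + BBᵀ + 2R = 0, E𝒫fᵀ = 𝒫fEᵀ associated with (E,A,B,C,R) if and only if S⁻ᵀ𝒫cT⁻¹ and S𝒫fTᵀ are stabilizing solutions of the corresponding GAREs associated with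 (Ẽ,Ã,B̃,C̃,R̃). -/
open Matrix

noncomputable section

/-- Entrywise complexification of a real matrix. -/
def Matrix.toC {k l : Type*} (M : Matrix k l ℝ) : Matrix k l ℂ :=
  M.map (algebraMap ℝ ℂ)

section Pencil

variable {n : Type*} [Fintype n] [DecidableEq n]

/-- The matrix pencil `(E, A)` is regular: `det (s E - A) ≠ 0` for some `s ∈ ℂ`. -/
def PencilRegular (E A : Matrix n n ℝ) : Prop :=
  ∃ s : ℂ, (s • E.toC - A.toC).det ≠ 0

/-- `lam ∈ ℂ` is a finite eigenvalue of the pencil `(E, A)`. -/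
def PencilFiniteEig (E A : Matrix n n ℝ) (lam : ℂ) : Prop :=
  (lam • E.toC - A.toC).det = 0

/-- The polynomial `s ↦ det (s E - A)` associated with the pencil `(E, A)`. -/
def pencilPoly (E A : Matrix n n ℝ) : Polynomial ℝ :=
  ((Polynomial.X : Polynomial ℝ) • E.map (Polynomial.C : ℝ → Polynomial ℝ)
      - A.map (Polynomial.C : ℝ → Polynomial ℝ)).det

/-- The pencil `(E, A)` is impulse-free: the degree of `s ↦ det (s E - A)` equals `rank E`. -/
def PencilImpulseFree (E A : Matrix n n ℝ) : Prop :=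
  (pencilPoly E A).natDegree = E.rank

/-- The pencil `(E, A)` is regular, impulse-free, and all of its finite eigenvalues
have negative real part. -/
def PencilStable (E A : Matrix n n ℝ) : Prop :=
  PencilRegular E A ∧ PencilImpulseFree E A ∧
    ∀ lam : ℂ, PencilFiniteEig E A lam → lam.re < 0

end Pencil

section Systems

variable {n m p : Type*} [Fintype n] [DecidableEq n] [Fintype m] [Fintype p]

/-- `(E, A, B)` is impulse controllable. -/
def ImpulseControllable (E A : Matrix n n ℝ) (B : Matrix n m ℝ) : Prop :=
  ∀ S₀ : Matrix n (Fin (Fintype.card n - E.rank)) ℝ,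
    LinearMap.range S₀.mulVecLin = LinearMap.ker E.mulVecLin →
    (Matrix.fromCols (Matrix.fromCols E (A * S₀)) B).rank = Fintype.card n

/-- `(E, A, B)` is strongly stabilizable. -/
def StronglyStabilizable (E A : Matrix n n ℝ) (B : Matrix n m ℝ) : Prop :=
  ImpulseControllable E A B ∧
    ∀ lam : ℂ, 0 ≤ lam.re →
      (Matrix.fromCols (lam • E.toC - A.toC) B.toC).rank = Fintype.card n

/-- `(E, A, B)` is strongly anti-stabilizable. -/
def StronglyAntiStabilizable (E A : Matrix n n ℝ) (B : Matrix n m ℝ) : Prop :=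
  ImpulseControllable E A B ∧
    ∀ lam : ℂ, lam.re ≤ 0 →
      (Matrix.fromCols (lam • E.toC - A.toC) B.toC).rank = Fintype.card n

/-- `(E, A, B)` is strongly controllable. -/
def StronglyControllable (E A : Matrix n n ℝ) (B : Matrix n m ℝ) : Prop :=
  StronglyStabilizable E A B ∧ StronglyAntiStabilizable E A B

/-- `(E, A, C)` is strongly detectable. -/
def StronglyDetectable (E A : Matrix n n ℝ) (C : Matrix p n ℝ) : Prop :=
  StronglyStabilizable Eᵀ Aᵀ Cᵀ

/-- The control generalized algebraic Riccati equation. -/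
def ControlGARE (E A : Matrix n n ℝ) (B : Matrix n m ℝ) (C : Matrix p n ℝ)
    (Pc : Matrix n n ℝ) : Prop :=
  Aᵀ * Pc + Pcᵀ * A - Pcᵀ * B * Bᵀ * Pc + Cᵀ * C = 0 ∧ Eᵀ * Pc = Pcᵀ * E

/-- The modified filter generalized algebraic Riccati equation. -/
def FilterGARE (E A : Matrix n n ℝ) (B : Matrix n m ℝ) (C : Matrix p n ℝ)
    (R : Matrix n n ℝ) (Pf : Matrix n n ℝ) : Prop :=
  A * Pfᵀ + Pf * Aᵀ - Pf * Cᵀ * C * Pfᵀ + B * Bᵀ + (2 : ℝ) • R = 0 ∧ E * Pfᵀ = Pf * Eᵀ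

/-- `Pc` is a stabilizing solution of the control GARE. -/
def ControlStabilizing (E A : Matrix n n ℝ) (B : Matrix n m ℝ) (C : Matrix p n ℝ)
    (Pc : Matrix n n ℝ) : Prop :=
  ControlGARE E A B C Pc ∧ PencilStable E (A - B * Bᵀ * Pc)

/-- `Pf` is a stabilizing solution of the modified filter GARE. -/
def FilterStabilizing (E A : Matrix n n ℝ) (B : Matrix n m ℝ) (C : Matrix p n ℝ)
    (R : Matrix n n ℝ) (Pf : Matrix n n ℝ) : Prop :=
  FilterGARE E A B C R Pf ∧ PencilStable E (A - Pf * Cᵀ * C)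

end Systems

/-!
An equivalence transformation `(E, A) ↦ (S E T, S A T)` multiplies `det (s E - A)` by the
nonzero constant `det S * det T` and preserves `rank E`, so it preserves regularity,
impulse-freeness and the finite eigenvalues of a pencil. With the substitutions of the theorem
the GARE residuals transform by congruence (with `T⁻¹` for the control equation and with `Sᵀ`
for the filter equation) and both closed-loop pencils by the equivalence `(S, T⁻¹)`, so every
condition holds for the original data iff it holds for the transformed data.
-/

section Pencil

variable {n : Type*} [Fintype n] [DecidableEq n]

theorem Matrix.det_smul_map_sub_map_mul_mul {R K : Type*} [CommRing R] [CommRing K]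
    (f : R →+* K) (s : K) (E A S T : Matrix n n R) :
    (s • (S * E * T).map f - (S * A * T).map f).det
      = f S.det * (s • E.map f - A.map f).det * f T.det := by
  rw [RingHom.map_det, RingHom.map_det, RingHom.mapMatrix_apply, RingHom.mapMatrix_apply,
    ← det_mul, ← det_mul]
  simp only [Matrix.map_mul, Matrix.mul_sub, Matrix.sub_mul, Matrix.mul_smul, Matrix.smul_mul]

theorem Matrix.algebraMap_det_ne_zero_of_isUnit {K L : Type*} [Field K] [Ring L] [Nontrivial L]
    [Algebra K L] {S : Matrix n n K} (hS : IsUnit S) : algebraMap K L S.det ≠ 0 :=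
  (map_ne_zero _).mpr ((isUnit_iff_isUnit_det S).mp hS).ne_zero

variable {E A S T : Matrix n n ℝ}

theorem pencilRegular_mul_mul_iff (hS : IsUnit S) (hT : IsUnit T) :
    PencilRegular (S * E * T) (S * A * T) ↔ PencilRegular E A := by
  simp only [PencilRegular, Matrix.toC, det_smul_map_sub_map_mul_mul, ne_eq, mul_eq_zero,
    algebraMap_det_ne_zero_of_isUnit hS, algebraMap_det_ne_zero_of_isUnit hT, false_or, or_false]

theorem pencilFiniteEig_mul_mul_iff (hS : IsUnit S) (hT : IsUnit T) (lam : ℂ) :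
    PencilFiniteEig (S * E * T) (S * A * T) lam ↔ PencilFiniteEig E A lam := by
  simp only [PencilFiniteEig, Matrix.toC, det_smul_map_sub_map_mul_mul, mul_eq_zero,
    algebraMap_det_ne_zero_of_isUnit hS, algebraMap_det_ne_zero_of_isUnit hT, false_or, or_false]

theorem pencilImpulseFree_mul_mul_iff (hS : IsUnit S) (hT : IsUnit T) :
    PencilImpulseFree (S * E * T) (S * A * T) ↔ PencilImpulseFree E A := by
  rw [isUnit_iff_isUnit_det] at hS hT
  rw [PencilImpulseFree, PencilImpulseFree, pencilPoly, det_smul_map_sub_map_mul_mul,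
    Polynomial.natDegree_mul_C hT.ne_zero, Polynomial.natDegree_C_mul hS.ne_zero,
    rank_mul_eq_left_of_isUnit_det T (S * E) hT, rank_mul_eq_right_of_isUnit_det S E hS,
    pencilPoly]

theorem pencilStable_mul_mul_iff (hS : IsUnit S) (hT : IsUnit T) :
    PencilStable (S * E * T) (S * A * T) ↔ PencilStable E A := by
  simp only [PencilStable, pencilRegular_mul_mul_iff hS hT, pencilImpulseFree_mul_mul_iff hS hT,
    pencilFiniteEig_mul_mul_iff hS hT]

end Pencil

section Riccati

variable {n m p : Type*} [Fintype n] [DecidableEq n] [Fintype m] [Fintype p]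

theorem Matrix.transpose_mul_nonsing_inv_transpose_cancel_left {α k : Type*} [CommRing α]
    {S : Matrix n n α} (Y : Matrix n k α) (hS : IsUnit S.det) : Sᵀ * ((S⁻¹)ᵀ * Y) = Y := by
  rw [transpose_nonsing_inv]
  exact mul_nonsing_inv_cancel_left _ Y (isUnit_det_transpose S hS)

variable {E A S T : Matrix n n ℝ} {B : Matrix n m ℝ} {C : Matrix p n ℝ}

theorem controlGARE_transform_iff (hS : IsUnit S) (hT : IsUnit T) (Pc : Matrix n n ℝ) :
    ControlGARE (S * E * T⁻¹) (S * A * T⁻¹) (S * B) (C * T⁻¹) ((S⁻¹)ᵀ * Pc * T⁻¹)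
      ↔ ControlGARE E A B C Pc := by
  rw [isUnit_iff_isUnit_det] at hS
  have hTinv : IsUnit T⁻¹ := isUnit_nonsing_inv_iff.mpr hT
  have hTinvt : IsUnit (T⁻¹)ᵀ := (isUnit_transpose _).mpr hTinv
  have hRiccati : (S * A * T⁻¹)ᵀ * ((S⁻¹)ᵀ * Pc * T⁻¹)
      + ((S⁻¹)ᵀ * Pc * T⁻¹)ᵀ * (S * A * T⁻¹)
      - ((S⁻¹)ᵀ * Pc * T⁻¹)ᵀ * (S * B) * (S * B)ᵀ * ((S⁻¹)ᵀ * Pc * T⁻¹)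
      + (C * T⁻¹)ᵀ * (C * T⁻¹)
      = (T⁻¹)ᵀ * (Aᵀ * Pc + Pcᵀ * A - Pcᵀ * B * Bᵀ * Pc + Cᵀ * C) * T⁻¹ := by
    simp only [transpose_mul, transpose_transpose, Matrix.mul_add, Matrix.add_mul,
      Matrix.mul_sub, Matrix.sub_mul, Matrix.mul_assoc,
      transpose_mul_nonsing_inv_transpose_cancel_left _ hS, nonsing_inv_mul_cancel_left _ _ hS]
  have hLeft : (S * E * T⁻¹)ᵀ * ((S⁻¹)ᵀ * Pc * T⁻¹) = (T⁻¹)ᵀ * (Eᵀ * Pc) * T⁻¹ := by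
    simp only [transpose_mul, Matrix.mul_assoc,
      transpose_mul_nonsing_inv_transpose_cancel_left _ hS]
  have hRight : ((S⁻¹)ᵀ * Pc * T⁻¹)ᵀ * (S * E * T⁻¹) = (T⁻¹)ᵀ * (Pcᵀ * E) * T⁻¹ := by
    simp only [transpose_mul, transpose_transpose, Matrix.mul_assoc,
      nonsing_inv_mul_cancel_left _ _ hS]
  rw [ControlGARE, ControlGARE, hRiccati, hLeft, hRight, hTinv.mul_left_eq_zero,
    hTinvt.mul_right_eq_zero, hTinv.mul_left_inj, hTinvt.mul_right_inj]

theorem filterGARE_transform_iff (hS : IsUnit S) (hT : IsUnit T) (R Pf : Matrix n n ℝ) :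
    FilterGARE (S * E * T⁻¹) (S * A * T⁻¹) (S * B) (C * T⁻¹) (S * R * Sᵀ) (S * Pf * Tᵀ)
      ↔ FilterGARE E A B C R Pf := by
  rw [isUnit_iff_isUnit_det] at hT
  have hSt : IsUnit Sᵀ := (isUnit_transpose _).mpr hS
  have hRiccati : (S * A * T⁻¹) * (S * Pf * Tᵀ)ᵀ + (S * Pf * Tᵀ) * (S * A * T⁻¹)ᵀ
      - (S * Pf * Tᵀ) * (C * T⁻¹)ᵀ * (C * T⁻¹) * (S * Pf * Tᵀ)ᵀ
      + (S * B) * (S * B)ᵀ + (2 : ℝ) • (S * R * Sᵀ)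
      = S * (A * Pfᵀ + Pf * Aᵀ - Pf * Cᵀ * C * Pfᵀ + B * Bᵀ + (2 : ℝ) • R) * Sᵀ := by
    simp only [transpose_mul, transpose_transpose, Matrix.mul_add, Matrix.add_mul,
      Matrix.mul_sub, Matrix.sub_mul, Matrix.mul_smul, Matrix.smul_mul, Matrix.mul_assoc,
      transpose_mul_nonsing_inv_transpose_cancel_left _ hT, nonsing_inv_mul_cancel_left _ _ hT]
  have hLeft : (S * E * T⁻¹) * (S * Pf * Tᵀ)ᵀ = S * (E * Pfᵀ) * Sᵀ := by
    simp only [transpose_mul, transpose_transpose, Matrix.mul_assoc,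
      nonsing_inv_mul_cancel_left _ _ hT]
  have hRight : (S * Pf * Tᵀ) * (S * E * T⁻¹)ᵀ = S * (Pf * Eᵀ) * Sᵀ := by
    simp only [transpose_mul, Matrix.mul_assoc,
      transpose_mul_nonsing_inv_transpose_cancel_left _ hT]
  rw [FilterGARE, FilterGARE, hRiccati, hLeft, hRight, hSt.mul_left_eq_zero,
    hS.mul_right_eq_zero, hSt.mul_left_inj, hS.mul_right_inj]

theorem controlStabilizing_transform_iff (hS : IsUnit S) (hT : IsUnit T) (Pc : Matrix n n ℝ) :
    ControlStabilizing (S * E * T⁻¹) (S * A * T⁻¹) (S * B) (C * T⁻¹) ((S⁻¹)ᵀ * Pc * T⁻¹)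
      ↔ ControlStabilizing E A B C Pc := by
  have hClosedLoop : S * A * T⁻¹ - S * B * (S * B)ᵀ * ((S⁻¹)ᵀ * Pc * T⁻¹)
      = S * (A - B * Bᵀ * Pc) * T⁻¹ := by
    simp only [transpose_mul, Matrix.mul_sub, Matrix.sub_mul, Matrix.mul_assoc,
      transpose_mul_nonsing_inv_transpose_cancel_left _ ((isUnit_iff_isUnit_det S).mp hS)]
  rw [ControlStabilizing, ControlStabilizing, controlGARE_transform_iff hS hT, hClosedLoop,
    pencilStable_mul_mul_iff hS (isUnit_nonsing_inv_iff.mpr hT)]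

theorem filterStabilizing_transform_iff (hS : IsUnit S) (hT : IsUnit T) (R Pf : Matrix n n ℝ) :
    FilterStabilizing (S * E * T⁻¹) (S * A * T⁻¹) (S * B) (C * T⁻¹) (S * R * Sᵀ) (S * Pf * Tᵀ)
      ↔ FilterStabilizing E A B C R Pf := by
  have hClosedLoop : S * A * T⁻¹ - S * Pf * Tᵀ * (C * T⁻¹)ᵀ * (C * T⁻¹)
      = S * (A - Pf * Cᵀ * C) * T⁻¹ := by
    simp only [transpose_mul, Matrix.mul_sub, Matrix.sub_mul, Matrix.mul_assoc,
      transpose_mul_nonsing_inv_transpose_cancel_left _ ((isUnit_iff_isUnit_det T).mp hT)]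
  rw [FilterStabilizing, FilterStabilizing, filterGARE_transform_iff hS hT, hClosedLoop,
    pencilStable_mul_mul_iff hS (isUnit_nonsing_inv_iff.mpr hT)]

end Riccati

theorem gare_stabilizing_iff_transformed_general
    {n m : ℕ} (E R Q : Matrix (Fin n) (Fin n) ℝ) (B : Matrix (Fin n) (Fin m) ℝ)
    (A C_ : _) (hC : C_ = Bᵀ * Q)
    (S T : Matrix (Fin n) (Fin n) ℝ) (hS : IsUnit S) (hT : IsUnit T)
    (Pc Pf : Matrix (Fin n) (Fin n) ℝ) :
    (ControlStabilizing E A B C_ Pc ∧ FilterStabilizing E A B C_ R Pf) ↔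
      (ControlStabilizing (S * E * T⁻¹) (S * A * T⁻¹) (S * B) (C_ * T⁻¹)
          ((S⁻¹)ᵀ * Pc * T⁻¹) ∧
        FilterStabilizing (S * E * T⁻¹) (S * A * T⁻¹) (S * B) (C_ * T⁻¹)
          (S * R * Sᵀ) (S * Pf * Tᵀ)) := by
  rw [controlStabilizing_transform_iff hS hT, filterStabilizing_transform_iff hS hT]

/-- Lemma `lem:transformedGramians`: stabilizing solutions of the two
GAREs transform covariantly under equivalence transformations of a port-Hamiltonian
descriptor system. -/
theorem gare_stabilizing_iff_transformed
    {n m : ℕ} (E J R Q : Matrix (Fin n) (Fin n) ℝ) (B : Matrix (Fin n) (Fin m) ℝ)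
    (A C_ : _) (hA : A = (J - R) * Q) (hC : C_ = Bᵀ * Q)
    (hJ : Jᵀ = -J) (hR : R.PosSemidef) (hEQ : (Eᵀ * Q).PosSemidef)
    (S T : Matrix (Fin n) (Fin n) ℝ) (hS : IsUnit S) (hT : IsUnit T)
    (Pc Pf : Matrix (Fin n) (Fin n) ℝ) :
    (ControlStabilizing E A B C_ Pc ∧ FilterStabilizing E A B C_ R Pf) ↔
      (ControlStabilizing (S * E * T⁻¹) (S * A * T⁻¹) (S * B) (C_ * T⁻¹)
          ((S⁻¹)ᵀ * Pc * T⁻¹) ∧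
        FilterStabilizing (S * E * T⁻¹) (S * A * T⁻¹) (S * B) (C_ * T⁻¹)
          (S * R * Sᵀ) (S * Pf * Tᵀ)) :=
  gare_stabilizing_iff_transformed_general E R Q B A C_ hC S T hS hT Pc Pf
end
end

section
/- Consider a port-Hamiltonian descriptor system given by E, J, R, Q ∈ ℝ^{n×n} and B ∈ ℝ^{n×m} with Jᵀ = −J, R = Rᵀ positive semidefinite, EᵀQ = QᵀE positive semidefinite, A := (J−R)Q, C := BᵀQ. Assume the pencil (E,A) is regular, (E,A,B) is strongly stabilizable, and (E,A,C) is strongly detectable. Then any two stabilizing solutions 𝒫c,1, 𝒫c,2 of the control GARE Aᵀ𝒫c + 𝒫cᵀA − 𝒫cᵀBBᵀ𝒫c + CᵀC = 0, Eᵀ𝒫c = 𝒫cᵀE satisfy Eᵀ𝒫c,1 = Eᵀ𝒫c,2, and any two stabilizing solutions 𝒫f,1, 𝒫f,2 of the modified filter GARE A𝒫fᵀ + 𝒫fAᵀ − 𝒫fCᵀC𝒫fᵀ + BBᵀ + 2R = 0, E𝒫fᵀ = 𝒫fEᵀ satisfy E𝒫f,1ᵀ = E𝒫f,2ᵀ.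 -/
open Matrix

noncomputable section

/-!
For two stabilizing solutions, the difference `Δ` solves the homogeneous generalized Sylvester
equation `F₂ᵀ Δ + Δᵀ F₁ = 0` with `Eᵀ Δ` symmetric, where `(E, F₁)` and `(E, F₂)` are the two
closed-loop pencils. With the polynomial matrices `L₁ = (s E - F₁)ᵀ` and `L₂ = s E + F₂` this
reads `L₁ Δ = Δᵀ L₂`, so `det L₁ • Δ adj L₂ = det L₂ • adj L₁ Δᵀ`. The two determinants are
coprime (their roots lie in the open left and right half-planes respectively), and the entries
of `adj L₂` have degree at most `rank E = deg det L₂` by impulse-freeness; hence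
`Δ adj L₂ = det L₂ • G` for a constant matrix `G`, which then satisfies `L₁ G = Δᵀ` and
`G L₂ = Δ`. Comparing coefficients gives `Eᵀ G = 0` and `G F₂ = Δ`, so
`Eᵀ Δ = Δᵀ E = F₂ᵀ (Eᵀ G)ᵀ = 0`.
-/

namespace Polynomial

theorem exists_eq_mul_C_of_mul_eq_mul {K : Type*} [Field K] {p q a b : K[X]}
    (hpq : IsCoprime p q) (hq : q ≠ 0) (ha : a.natDegree ≤ q.natDegree) (h : p * a = q * b) :
    ∃ c : K, a = q * C c ∧ b = p * C c := by
  obtain ⟨g, rfl⟩ : q ∣ a := hpq.symm.dvd_of_dvd_mul_left ⟨b, h⟩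
  have hb : b = p * g := mul_left_cancel₀ hq (by rw [← h]; ring)
  rcases eq_or_ne g 0 with rfl | hg
  · exact ⟨0, by simp, by simp [hb]⟩
  · rw [natDegree_mul hq hg] at ha
    refine ⟨g.coeff 0, ?_, ?_⟩ <;>
      rw [← eq_C_of_natDegree_eq_zero (by omega)]
    exact hb

end Polynomial

namespace Matrix

open Polynomial

section CommRing

variable {K : Type*} [CommRing K] {l m n : Type*}

def pencil (E F : Matrix m n K) : Matrix m n K[X] := (X : K[X]) • E.map C + F.map C

theorem pencil_transpose (E F : Matrix m n K) : (pencil E F)ᵀ = pencil Eᵀ Fᵀ := by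
  simp [pencil, transpose_map]

theorem pencil_mul_map_C [Fintype n] (E F : Matrix m n K) (G : Matrix n l K) :
    pencil E F * G.map C = pencil (E * G) (F * G) := by
  simp only [pencil, Matrix.add_mul, Matrix.smul_mul, Matrix.map_mul]

theorem map_C_mul_pencil [Fintype m] (G : Matrix l m K) (E F : Matrix m n K) :
    G.map C * pencil E F = pencil (G * E) (G * F) := by
  simp only [pencil, Matrix.mul_add, Matrix.mul_smul, Matrix.map_mul]

theorem pencil_eq_map_C_iff {E F D : Matrix m n K} :
    pencil E F = D.map C ↔ E = 0 ∧ F = D := by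
  constructor
  · intro h
    refine ⟨ext fun i j => ?_, ext fun i j => ?_⟩
    · simpa [pencil] using congrArg (fun M => (M i j).coeff 1) h
    · simpa [pencil] using congrArg (fun M => (M i j).coeff 0) h
  · rintro ⟨rfl, rfl⟩
    simp [pencil]

theorem pencil_updateRow [DecidableEq m] (E F : Matrix m n K) (j : m) (v : n → K) :
    (pencil E F).updateRow j (fun b => C (v b)) =
      pencil (E.updateRow j 0) (F.updateRow j v) := by
  ext a b : 1
  by_cases hab : a = j
  · subst hab; simp [pencil]
  · simp [pencil, updateRow_ne hab]

variable [Fintype n] [DecidableEq n]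

theorem det_pencil_eq_sum (E F : Matrix n n K) :
    (pencil E F).det = ∑ s : Finset n, X ^ s.card * C (of (s.piecewise E.row F.row)).det := by
  let D := (detRowAlternating : (n → K[X]) [⋀^n]→ₗ[K[X]] K[X])
  change D ((fun i => ((X : K[X]) • E.map C) i) + fun i => F.map C i) = _
  rw [D.map_add_univ]
  refine Finset.sum_congr rfl fun s _ => ?_
  have hsplit : s.piecewise (fun i => ((X : K[X]) • E.map C) i) (fun i => F.map C i) =
      fun i =>
        (if i ∈ s then (X : K[X]) else 1) • ((of (s.piecewise E.row F.row)).map C).row i := by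
    ext i j : 2
    by_cases hi : i ∈ s <;> simp [hi]
  rw [hsplit, D.map_smul_univ, Finset.prod_ite_mem, Finset.univ_inter, Finset.prod_const,
    smul_eq_mul, RingHom.map_det]
  rfl

theorem det_pencil_comp_neg_X (E F : Matrix n n K) :
    (pencil E F).det.comp (-X) = (-1) ^ Fintype.card n * (pencil E (-F)).det := by
  have hmap : (pencil E F).map (eval₂RingHom C (-X)) = -pencil E (-F) := by
    ext i j : 2
    simp [pencil]
    ring
  rw [← det_neg, ← hmap, ← RingHom.mapMatrix_apply, ← RingHom.map_det]
  rfl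

end CommRing

section Field

variable {K : Type*} [Field K] {m n : Type*}

theorem exists_eq_smul_map_C_of_smul_eq_smul {p q : K[X]} {M N : Matrix m n K[X]}
    (hpq : IsCoprime p q) (hq : q ≠ 0) (hM : ∀ i j, (M i j).natDegree ≤ q.natDegree)
    (h : p • M = q • N) : ∃ G : Matrix m n K, M = q • G.map C ∧ N = p • G.map C := by
  choose G hG using fun i j =>
    exists_eq_mul_C_of_mul_eq_mul hpq hq (hM i j) (congrFun (congrFun h i) j)
  exact ⟨of G, ext fun i j => (hG i j).1, ext fun i j => (hG i j).2⟩

variable [Fintype n]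

theorem card_le_rank_of_linearIndependent_rows [Fintype m] {E : Matrix m n K} {s : Finset m}
    (h : LinearIndependent K fun i : s => E i) : s.card ≤ E.rank := by
  have := LinearIndependent.rank_matrix (M := E.submatrix ((↑) : s → m) id) h
  rw [Fintype.card_coe] at this
  exact this ▸ rank_submatrix_le E _ _

theorem rank_updateRow_zero_le [DecidableEq m] [Fintype m] (E : Matrix m n K) (j : m) :
    (E.updateRow j 0).rank ≤ E.rank := by
  have h : E.updateRow j 0 = diagonal (fun i => if i = j then (0 : K) else 1) * E := by
    ext a b
    by_cases hab : a = j
    · subst hab; simp [diagonal_mul]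
    · simp [diagonal_mul, hab]
  exact h ▸ rank_mul_le_right _ _

variable [DecidableEq n]

theorem det_of_piecewise_eq_zero {E F : Matrix n n K} {s : Finset n} (hs : E.rank < s.card) :
    (of (s.piecewise E.row F.row)).det = 0 := by
  by_contra hdet
  have hrows := linearIndependent_rows_iff_isUnit.2 ((isUnit_iff_isUnit_det _).2 (Ne.isUnit hdet))
  refine (card_le_rank_of_linearIndependent_rows (E := E) (s := s) ?_).not_gt hs
  convert hrows.comp ((↑) : s → n) Subtype.val_injective using 1
  funext i
  exact (Finset.piecewise_eq_of_mem _ _ _ i.2).symm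

theorem natDegree_det_pencil_le (E F : Matrix n n K) :
    (pencil E F).det.natDegree ≤ E.rank := by
  rw [det_pencil_eq_sum]
  refine natDegree_sum_le_of_forall_le _ _ fun s _ => ?_
  rcases le_or_gt s.card E.rank with hs | hs
  · exact natDegree_mul_le.trans (by simpa using hs)
  · simp [det_of_piecewise_eq_zero hs]

theorem natDegree_adjugate_pencil_le (E F : Matrix n n K) (i j : n) :
    ((pencil E F).adjugate i j).natDegree ≤ E.rank := by
  have hsingle : (Pi.single i 1 : n → K[X]) = fun b => C ((Pi.single i (1 : K) : n → K) b) := by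
    ext b : 1
    by_cases hb : b = i
    · subst hb; simp
    · simp [hb]
  rw [adjugate_apply, hsingle, pencil_updateRow]
  exact (natDegree_det_pencil_le _ _).trans (rank_updateRow_zero_le E j)

theorem natDegree_det_pencil_neg (E F : Matrix n n K) :
    (pencil E (-F)).det.natDegree = (pencil E F).det.natDegree := by
  have h := congrArg natDegree (det_pencil_comp_neg_X E F)
  rwa [natDegree_comp, natDegree_neg, natDegree_X, mul_one, ← C_1, ← C_neg, ← C_pow,
    natDegree_C_mul (pow_ne_zero _ (neg_ne_zero.2 one_ne_zero)), eq_comm] at h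

theorem exists_mul_map_C_eq_of_isCoprime_det {L₁ L₂ : Matrix n n K[X]} {M N : Matrix n n K}
    (hcop : IsCoprime L₁.det L₂.det) (hp : L₁.det ≠ 0) (hq : L₂.det ≠ 0)
    (hdeg : ∀ i j, (L₂.adjugate i j).natDegree ≤ L₂.det.natDegree)
    (h : L₁ * M.map C = N.map C * L₂) :
    ∃ G : Matrix n n K, L₁ * G.map C = N.map C ∧ G.map C * L₂ = M.map C := by
  have hmain : L₁.det • (M.map C * L₂.adjugate) = L₂.det • (L₁.adjugate * N.map C) := by
    calc _ = L₁.adjugate * L₁ * M.map C * L₂.adjugate := by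
          rw [adjugate_mul, smul_mul, smul_mul, Matrix.one_mul]
      _ = L₁.adjugate * N.map C * (L₂ * L₂.adjugate) := by
          rw [Matrix.mul_assoc L₁.adjugate, h]; simp only [Matrix.mul_assoc]
      _ = _ := by rw [mul_adjugate, Matrix.mul_smul, Matrix.mul_one]
  have hdegM : ∀ i j, ((M.map C * L₂.adjugate) i j).natDegree ≤ L₂.det.natDegree := fun i j =>
    natDegree_sum_le_of_forall_le _ _ fun k _ => natDegree_C_mul_le _ _ |>.trans (hdeg k j)
  obtain ⟨G, hM, hN⟩ := exists_eq_smul_map_C_of_smul_eq_smul hcop hq hdegM hmain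
  refine ⟨G, smul_right_injective _ hp ?_, smul_right_injective _ hq ?_⟩ <;> dsimp only
  · rw [← Matrix.mul_smul, ← hN, ← Matrix.mul_assoc, mul_adjugate, smul_mul, Matrix.one_mul]
  · rw [← Matrix.smul_mul, ← hM, Matrix.mul_assoc, adjugate_mul, Matrix.mul_smul, Matrix.mul_one]

theorem transpose_mul_eq_zero_of_isCoprime {E F₁ F₂ Δ : Matrix n n K}
    (hcop : IsCoprime (pencil E (-F₁)).det (pencil E F₂).det)
    (hp : (pencil E (-F₁)).det ≠ 0) (hq : (pencil E F₂).det ≠ 0)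
    (hdeg : E.rank ≤ (pencil E F₂).det.natDegree)
    (hsylv : F₂ᵀ * Δ + Δᵀ * F₁ = 0) (hsymm : Eᵀ * Δ = Δᵀ * E) : Eᵀ * Δ = 0 := by
  have hL₁ : (pencil Eᵀ (-F₁ᵀ)).det = (pencil E (-F₁)).det := by
    rw [← det_transpose, pencil_transpose, transpose_neg, transpose_transpose, transpose_transpose]
  have hF : -F₁ᵀ * Δ = Δᵀ * F₂ := by
    have := congrArg transpose hsylv
    simp only [transpose_add, transpose_mul, transpose_transpose, transpose_zero] at this
    rw [neg_mul, eq_comm]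
    exact eq_neg_of_add_eq_zero_left this
  have hid : pencil Eᵀ (-F₁ᵀ) * Δ.map C = Δᵀ.map C * pencil E F₂ := by
    rw [pencil_mul_map_C, map_C_mul_pencil, hsymm, hF]
  obtain ⟨G, hEG, hGF⟩ := exists_mul_map_C_eq_of_isCoprime_det (hL₁ ▸ hcop) (hL₁ ▸ hp) hq
    (fun i j => (natDegree_adjugate_pencil_le E F₂ i j).trans hdeg) hid
  rw [pencil_mul_map_C, pencil_eq_map_C_iff] at hEG
  rw [map_C_mul_pencil, pencil_eq_map_C_iff] at hGF
  calc Eᵀ * Δ = Δᵀ * E := hsymm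
    _ = F₂ᵀ * (Eᵀ * G)ᵀ := by
      rw [← hGF.2, transpose_mul, transpose_mul, transpose_transpose, Matrix.mul_assoc]
    _ = 0 := by rw [hEG.1, transpose_zero, Matrix.mul_zero]

end Field

end Matrix

section Pencils

open Polynomial

variable {n : Type*} [Fintype n] [DecidableEq n]

theorem pencilPoly_eq_det_pencil (E F : Matrix n n ℝ) : pencilPoly E F = (pencil E (-F)).det := by
  simp only [pencilPoly, pencil, sub_eq_add_neg]
  congr 2
  ext i j : 2
  simp

theorem aeval_det_pencil (E F : Matrix n n ℝ) (z : ℂ) :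
    aeval z (pencil E F).det = (z • E.toC + F.toC).det := by
  rw [AlgHom.map_det]
  congr 1
  ext i j
  simp [pencil, Matrix.toC]
  ring

theorem pencilFiniteEig_iff_aeval_det_pencil_neg {E F : Matrix n n ℝ} {z : ℂ} :
    PencilFiniteEig E F z ↔ aeval z (pencil E (-F)).det = 0 := by
  rw [aeval_det_pencil, PencilFiniteEig, sub_eq_add_neg]
  congr! 3
  ext i j
  simp [Matrix.toC]

theorem pencilFiniteEig_neg_iff_aeval_det_pencil {E F : Matrix n n ℝ} {z : ℂ} :
    PencilFiniteEig E F (-z) ↔ aeval z (pencil E F).det = 0 := by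
  have h : z • E.toC + F.toC = -((-z) • E.toC - F.toC) := by rw [neg_smul]; abel
  rw [aeval_det_pencil, PencilFiniteEig, h, det_neg]
  simp

theorem PencilRegular.det_pencil_neg_ne_zero {E F : Matrix n n ℝ} (h : PencilRegular E F) :
    (pencil E (-F)).det ≠ 0 := by
  obtain ⟨s, hs⟩ := h
  intro h0
  exact hs (pencilFiniteEig_iff_aeval_det_pencil_neg.2 (by rw [h0, map_zero]))

theorem PencilRegular.det_pencil_ne_zero {E F : Matrix n n ℝ} (h : PencilRegular E F) :
    (pencil E F).det ≠ 0 := by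
  obtain ⟨s, hs⟩ := h
  intro h0
  have := pencilFiniteEig_neg_iff_aeval_det_pencil (E := E) (F := F) (z := -s) |>.2
    (by rw [h0, map_zero])
  rw [neg_neg] at this
  exact hs this

theorem PencilStable.natDegree_det_pencil {E F : Matrix n n ℝ} (h : PencilStable E F) :
    (pencil E F).det.natDegree = E.rank := by
  rw [← natDegree_det_pencil_neg, ← pencilPoly_eq_det_pencil]
  exact h.2.1

theorem PencilStable.isCoprime_det_pencil {E F₁ F₂ : Matrix n n ℝ} (h₁ : PencilStable E F₁)
    (h₂ : PencilStable E F₂) : IsCoprime (pencil E (-F₁)).det (pencil E F₂).det := by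
  rw [isCoprime_iff_aeval_ne_zero_of_isAlgClosed ℝ ℂ]
  intro z
  by_contra! hz
  have hre₁ := h₁.2.2 z (pencilFiniteEig_iff_aeval_det_pencil_neg.2 hz.1)
  have hre₂ := h₂.2.2 (-z) (pencilFiniteEig_neg_iff_aeval_det_pencil.2 hz.2)
  rw [Complex.neg_re] at hre₂
  linarith

theorem PencilStable.transpose {E F : Matrix n n ℝ} (h : PencilStable E F) :
    PencilStable Eᵀ Fᵀ := by
  have hdet : ∀ z : ℂ, (z • Eᵀ.toC - Fᵀ.toC).det = (z • E.toC - F.toC).det := fun z => by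
    rw [← det_transpose]
    rfl
  obtain ⟨⟨s, hs⟩, himp, hstab⟩ := h
  refine ⟨⟨s, hdet s ▸ hs⟩, ?_, fun z hz => hstab z ((hdet z).symm.trans hz)⟩
  rw [PencilImpulseFree, pencilPoly_eq_det_pencil, ← transpose_neg, ← pencil_transpose,
    det_transpose, rank_transpose, ← pencilPoly_eq_det_pencil]
  exact himp

theorem transpose_mul_eq_zero_of_pencilStable {E F₁ F₂ Δ : Matrix n n ℝ}
    (h₁ : PencilStable E F₁) (h₂ : PencilStable E F₂)
    (hsylv : F₂ᵀ * Δ + Δᵀ * F₁ = 0) (hsymm : Eᵀ * Δ = Δᵀ * E) : Eᵀ * Δ = 0 :=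
  transpose_mul_eq_zero_of_isCoprime (h₁.isCoprime_det_pencil h₂) h₁.1.det_pencil_neg_ne_zero
    h₂.1.det_pencil_ne_zero h₂.natDegree_det_pencil.ge hsylv hsymm

end Pencils

section Riccati

variable {n m p : Type*} [Fintype n] [Fintype m] [Fintype p]
  {E A : Matrix n n ℝ} {B : Matrix n m ℝ} {C : Matrix p n ℝ}

theorem ControlGARE.sylvester_sub {P₁ P₂ : Matrix n n ℝ} (h₁ : ControlGARE E A B C P₁)
    (h₂ : ControlGARE E A B C P₂) :
    (A - B * Bᵀ * P₂)ᵀ * (P₁ - P₂) + (P₁ - P₂)ᵀ * (A - B * Bᵀ * P₁) = 0 ∧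
      Eᵀ * (P₁ - P₂) = (P₁ - P₂)ᵀ * E := by
  refine ⟨?_, by rw [Matrix.mul_sub, transpose_sub, Matrix.sub_mul, h₁.2, h₂.2]⟩
  calc _ = (Aᵀ * P₁ + P₁ᵀ * A - P₁ᵀ * B * Bᵀ * P₁ + Cᵀ * C)
        - (Aᵀ * P₂ + P₂ᵀ * A - P₂ᵀ * B * Bᵀ * P₂ + Cᵀ * C) := by
        simp only [transpose_sub, transpose_mul, transpose_transpose, Matrix.sub_mul,
          Matrix.mul_sub, Matrix.mul_assoc]
        abel
    _ = 0 := by rw [h₁.1, h₂.1, sub_zero]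

theorem FilterGARE.sylvester_sub {R P₁ P₂ : Matrix n n ℝ} (h₁ : FilterGARE E A B C R P₁)
    (h₂ : FilterGARE E A B C R P₂) :
    (A - P₂ * Cᵀ * C) * (P₁ - P₂)ᵀ + (P₁ - P₂) * (A - P₁ * Cᵀ * C)ᵀ = 0 ∧
      E * (P₁ - P₂)ᵀ = (P₁ - P₂) * Eᵀ := by
  refine ⟨?_, by rw [transpose_sub, Matrix.mul_sub, Matrix.sub_mul, h₁.2, h₂.2]⟩
  calc _ = (A * P₁ᵀ + P₁ * Aᵀ - P₁ * Cᵀ * C * P₁ᵀ + B * Bᵀ + (2 : ℝ) • R)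
        - (A * P₂ᵀ + P₂ * Aᵀ - P₂ * Cᵀ * C * P₂ᵀ + B * Bᵀ + (2 : ℝ) • R) := by
        simp only [transpose_sub, transpose_mul, transpose_transpose, Matrix.sub_mul,
          Matrix.mul_sub, Matrix.mul_assoc]
        abel
    _ = 0 := by rw [h₁.1, h₂.1, sub_zero]

variable [DecidableEq n]

theorem ControlStabilizing.transpose_mul_eq {P₁ P₂ : Matrix n n ℝ}
    (h₁ : ControlStabilizing E A B C P₁) (h₂ : ControlStabilizing E A B C P₂) :
    Eᵀ * P₁ = Eᵀ * P₂ := by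
  obtain ⟨hsylv, hsymm⟩ := h₁.1.sylvester_sub h₂.1
  rw [← sub_eq_zero, ← Matrix.mul_sub]
  exact transpose_mul_eq_zero_of_pencilStable h₁.2 h₂.2 hsylv hsymm

theorem FilterStabilizing.mul_transpose_eq {R P₁ P₂ : Matrix n n ℝ}
    (h₁ : FilterStabilizing E A B C R P₁) (h₂ : FilterStabilizing E A B C R P₂) :
    E * P₁ᵀ = E * P₂ᵀ := by
  obtain ⟨hsylv, hsymm⟩ := h₁.1.sylvester_sub h₂.1
  rw [← sub_eq_zero, ← Matrix.mul_sub, ← transpose_sub, ← transpose_transpose E]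
  exact transpose_mul_eq_zero_of_pencilStable h₁.2.transpose h₂.2.transpose
    (by simpa only [transpose_transpose] using hsylv)
    (by simpa only [transpose_transpose] using hsymm)

end Riccati

theorem gare_stabilizing_solutions_unique_general
    {n m : ℕ} (E R Q : Matrix (Fin n) (Fin n) ℝ) (B : Matrix (Fin n) (Fin m) ℝ)
    (A C_ : _) (hC : C_ = Bᵀ * Q) :
    (∀ Pc₁ Pc₂ : Matrix (Fin n) (Fin n) ℝ,
        ControlStabilizing E A B C_ Pc₁ → ControlStabilizing E A B C_ Pc₂ →
        Eᵀ * Pc₁ = Eᵀ * Pc₂) ∧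
      (∀ Pf₁ Pf₂ : Matrix (Fin n) (Fin n) ℝ,
        FilterStabilizing E A B C_ R Pf₁ → FilterStabilizing E A B C_ R Pf₂ →
        E * Pf₁ᵀ = E * Pf₂ᵀ) :=
  ⟨fun _ _ h₁ h₂ => h₁.transpose_mul_eq h₂, fun _ _ h₁ h₂ => h₁.mul_transpose_eq h₂⟩

/-- Theorem `thm:solutionsOfNonsymmetricGAREs` (ii): any two
stabilizing solutions of the control GARE (resp. modified filter GARE) give the same
product `Eᵀ𝒫c` (resp. `E𝒫fᵀ`). -/
theorem gare_stabilizing_solutions_unique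
    {n m : ℕ} (E J R Q : Matrix (Fin n) (Fin n) ℝ) (B : Matrix (Fin n) (Fin m) ℝ)
    (A C_ : _) (hA : A = (J - R) * Q) (hC : C_ = Bᵀ * Q)
    (hJ : Jᵀ = -J) (hR : R.PosSemidef) (hEQ : (Eᵀ * Q).PosSemidef)
    (hreg : PencilRegular E A)
    (hstab : StronglyStabilizable E A B)
    (hdet : StronglyDetectable E A C_) :
    (∀ Pc₁ Pc₂ : Matrix (Fin n) (Fin n) ℝ,
        ControlStabilizing E A B C_ Pc₁ → ControlStabilizing E A B C_ Pc₂ →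
        Eᵀ * Pc₁ = Eᵀ * Pc₂) ∧
      (∀ Pf₁ Pf₂ : Matrix (Fin n) (Fin n) ℝ,
        FilterStabilizing E A B C_ R Pf₁ → FilterStabilizing E A B C_ R Pf₂ →
        E * Pf₁ᵀ = E * Pf₂ᵀ) :=
  gare_stabilizing_solutions_unique_general E R Q B A C_ hC
end
end

section
/- Consider a port-Hamiltonian descriptor system given by E, J, R, Q ∈ ℝ^{n×n} and B ∈ ℝ^{n×m} with Jᵀ = −J, R = Rᵀ positive semidefinite, EᵀQ = QᵀE positive semidefinite, A := (J−R)Q, C := BᵀQ. Assume the pencil (E,A) is regular, (E,A,B) is strongly stabilizable, (E,A,C) is strongly detectable, and Q is invertible. Then Q⁻ᵀ is a stabilizing solution of the modified filter GARE, i.e., AQ⁻¹ + Q⁻ᵀAᵀ − Q⁻ᵀCᵀCQ⁻¹ + BBᵀ + 2R = 0, EQ⁻¹ = Q⁻ᵀEᵀ, and the pencil (E, A − Q⁻ᵀCᵀC) is regular, impulse-free, and all its finite eigenvalues have negative real part. -/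
open Matrix

noncomputable section

/-!
With `A = (J - R) Q` and `C = Bᵀ Q`, the Riccati equation for `Q⁻ᵀ` collapses to
`(J - R) + (J - R)ᵀ + 2 R = 0`, and the closed loop `A_cl := A - Q⁻ᵀ Cᵀ C = (J - (R + B Bᵀ)) Q`
is again port-Hamiltonian, with dissipation `R + B Bᵀ`. Let `v` be an eigenvector of `A_cl` for
some `λ` with `Re λ ≥ 0`, or the start of an impulsive chain `E v = 0`, `A_cl v = E w`. Test with
`x = Q v`: since `Qᵀ E ⪰ 0` and `Jᵀ = -J`, the energy `x* (R + B Bᵀ) x` dissipated along `x` must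
vanish. Then `C v = Bᵀ x = 0`, so `v` is such a vector for `(E, A)` as well, and strong
detectability forces `v = 0`. This rules out finite eigenvalues with `Re λ ≥ 0`, and the absence
of impulsive chains says that `A_cl⁻¹ E` has index at most one, so that `det (s E - A_cl)` has
degree `rank E`.
-/

namespace Matrix

variable {k l o : Type*}

theorem toC_mul [Fintype l] (M : Matrix k l ℝ) (N : Matrix l o ℝ) :
    (M * N).toC = M.toC * N.toC :=
  Matrix.map_mul

theorem toC_add (M N : Matrix k l ℝ) : (M + N).toC = M.toC + N.toC :=
  Matrix.map_add _ (map_add _) M N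

theorem toC_sub (M N : Matrix k l ℝ) : (M - N).toC = M.toC - N.toC :=
  Matrix.map_sub _ (map_sub _) M N

theorem toC_neg (M : Matrix k l ℝ) : (-M).toC = -M.toC :=
  Matrix.map_neg _ (map_neg _) M

theorem conjTranspose_toC (M : Matrix k l ℝ) : M.toCᴴ = Mᵀ.toC := by
  ext i j
  simp [toC, conjTranspose_apply]

theorem det_toC [Fintype k] [DecidableEq k] (M : Matrix k k ℝ) : M.toC.det = (M.det : ℂ) :=
  (RingHom.map_det (algebraMap ℝ ℂ) M).symm

open scoped ComplexOrder in
theorem PosSemidef.toC [Fintype k] [DecidableEq k] {S : Matrix k k ℝ} (hS : S.PosSemidef) :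
    S.toC.PosSemidef := by
  open scoped MatrixOrder in
  obtain ⟨T, rfl⟩ := CStarAlgebra.nonneg_iff_eq_star_mul_self.mp hS.nonneg
  rw [star_eq_conjTranspose, toC_mul, conjTranspose_eq_transpose_of_trivial, ← conjTranspose_toC]
  exact posSemidef_conjTranspose_mul_self _

end Matrix

theorem Module.End.maxGenEigenspace_zero_eq_ker {K V : Type*} [Field K] [AddCommGroup V]
    [Module K V] {f : Module.End K V} (hf : Disjoint (LinearMap.ker f) (LinearMap.range f)) :
    f.maxGenEigenspace 0 = LinearMap.ker f := by
  have hker : LinearMap.ker (f ^ 1) = LinearMap.ker (f ^ (1 + 1)) := by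
    refine le_antisymm (LinearMap.ker_le_ker_comp _ _) fun x hx => ?_
    have hfx : f x ∈ LinearMap.ker f := by simpa [pow_succ] using hx
    simpa using hf.le_bot ⟨hfx, x, rfl⟩
  ext x
  rw [mem_maxGenEigenspace, zero_smul, sub_zero]
  refine ⟨fun ⟨k, hk⟩ => ?_, fun hx => ⟨1, by simpa using hx⟩⟩
  rcases k with _ | k
  · simp_all
  · have hstable := ker_pow_constant hker k
    rw [pow_one, add_comm] at hstable
    rwa [hstable]

namespace Matrix

variable {K m k : Type*} [Field K] [Fintype k]

theorem natDegree_charpolyRev_eq_rank [DecidableEq k] (N : Matrix k k K)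
    (hN : Disjoint (LinearMap.ker N.mulVecLin) (LinearMap.range N.mulVecLin)) :
    N.charpolyRev.natDegree = N.rank := by
  have hnull := LinearMap.finrank_range_add_finrank_ker N.mulVecLin
  rw [← toLin'_apply'] at hN hnull
  rw [Module.finrank_fintype_fun_eq_card] at hnull
  -- `charpolyRev N` is the reversed characteristic polynomial, so its degree is `card k` minus
  -- the multiplicity of the eigenvalue `0`, which is `dim ker N` because `N` has index one.
  have htrail : N.charpoly.natTrailingDegree = Module.finrank K (LinearMap.ker (toLin' N)) := by
    rw [← charpoly_toLin', ← LinearMap.finrank_maxGenEigenspace_zero_eq,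
      Module.End.maxGenEigenspace_zero_eq_ker hN]
  rw [← reverse_charpoly, Polynomial.reverse_natDegree, htrail, charpoly_natDegree_eq_dim, rank,
    ← toLin'_apply']
  omega

theorem eq_zero_of_vecMul_eq_zero_of_rank_eq_card [Fintype m] {M : Matrix m k K}
    (hM : M.rank = Fintype.card m) {v : m → K} (hv : v ᵥ* M = 0) : v = 0 := by
  have hnull := LinearMap.finrank_range_add_finrank_ker Mᵀ.mulVecLin
  rw [Module.finrank_fintype_fun_eq_card, ← rank, rank_transpose, hM] at hnull
  have hker : LinearMap.ker Mᵀ.mulVecLin = ⊥ := Submodule.finrank_eq_zero.mp (by omega)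
  exact ker_mulVecLin_eq_bot_iff.mp hker v (by rwa [mulVec_transpose])

theorem exists_range_mulVecLin_eq_ker (E : Matrix m k K) :
    ∃ S : Matrix k (Fin (Fintype.card k - E.rank)) K,
      LinearMap.range S.mulVecLin = LinearMap.ker E.mulVecLin := by
  have hnull := LinearMap.finrank_range_add_finrank_ker E.mulVecLin
  rw [Module.finrank_fintype_fun_eq_card, ← rank] at hnull
  let e := LinearEquiv.ofFinrankEq (Fin (Fintype.card k - E.rank) → K)
    (LinearMap.ker E.mulVecLin) (by rw [Module.finrank_fin_fun]; omega)
  refine ⟨LinearMap.toMatrix' ((LinearMap.ker E.mulVecLin).subtype ∘ₗ e.toLinearMap), ?_⟩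
  rw [← toLin'_apply', toLin'_toMatrix', LinearMap.range_comp, LinearEquiv.range,
    Submodule.map_top, Submodule.range_subtype]

end Matrix

section Pencil

open Matrix Polynomial

variable {n : Type*} [Fintype n] [DecidableEq n] {E A : Matrix n n ℝ}

theorem pencilImpulseFree_of_isUnit_det (hA : IsUnit A.det)
    (h : ∀ u w : n → ℝ, E *ᵥ u = 0 → A *ᵥ u = E *ᵥ w → u = 0) : PencilImpulseFree E A := by
  set N := A⁻¹ * E
  have hAN : A * N = E := mul_nonsing_inv_cancel_left A E hA
  have hdisj : Disjoint (LinearMap.ker N.mulVecLin) (LinearMap.range N.mulVecLin) := by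
    rw [disjoint_iff_inf_le]
    rintro u ⟨hu, w, rfl⟩
    refine h _ w ?_ (by simp [hAN])
    rw [← hAN, ← mulVec_mulVec]
    simp_all
  have hfactor : (X : ℝ[X]) • E.map C - A.map C = -A.map C * (1 - (X : ℝ[X]) • N.map C) := by
    rw [← hAN, Matrix.map_mul, neg_mul, mul_sub, mul_one, mul_smul_comm, neg_sub]
  have hdetA : (-A.map C).det = C (-A).det := by
    rw [RingHom.map_det, RingHom.mapMatrix_apply, Matrix.map_neg _ (map_neg C)]
  have hdetA_ne : (-A).det ≠ 0 := by
    rw [det_neg]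
    exact mul_ne_zero (pow_ne_zero _ (neg_ne_zero.mpr one_ne_zero)) hA.ne_zero
  rw [PencilImpulseFree, pencilPoly, hfactor, det_mul, ← charpolyRev, hdetA,
    natDegree_C_mul hdetA_ne, natDegree_charpolyRev_eq_rank N hdisj, ← hAN,
    rank_mul_eq_right_of_isUnit_det A N hA]

theorem pencilStable_of_forall_mulVec
    (hfin : ∀ (lam : ℂ) (v : n → ℂ), 0 ≤ lam.re → (lam • E.toC - A.toC) *ᵥ v = 0 → v = 0)
    (himp : ∀ u w : n → ℝ, E *ᵥ u = 0 → A *ᵥ u = E *ᵥ w → u = 0) : PencilStable E A := by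
  have hdet (lam : ℂ) (hlam : 0 ≤ lam.re) : (lam • E.toC - A.toC).det ≠ 0 := fun h0 => by
    obtain ⟨v, hv, hv0⟩ := exists_mulVec_eq_zero_iff.mpr h0
    exact hv (hfin lam v hlam hv0)
  have hA : IsUnit A.det := by
    have := hdet 0 le_rfl
    simp_all [det_neg, det_toC]
  exact ⟨⟨0, hdet 0 le_rfl⟩, pencilImpulseFree_of_isUnit_det hA himp,
    fun lam hlam => not_le.mp fun h => hdet lam h hlam⟩

end Pencil

section Systems

open Matrix

variable {n m : Type*} [Fintype n] [Fintype m]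

theorem ImpulseControllable.eq_zero_of_vecMul {E A : Matrix n n ℝ} {B : Matrix n m ℝ}
    (h : ImpulseControllable E A B) {v w : n → ℝ} (hE : v ᵥ* E = 0) (hA : v ᵥ* A = w ᵥ* E)
    (hB : v ᵥ* B = 0) : v = 0 := by
  classical
  obtain ⟨S, hS⟩ := E.exists_range_mulVecLin_eq_ker
  have hES : E * S = 0 := by
    have hcomp := LinearMap.range_le_ker_iff.mp hS.le
    rwa [← toLin'_apply', ← toLin'_apply', ← toLin'_mul, LinearEquiv.map_eq_zero_iff] at hcomp
  refine eq_zero_of_vecMul_eq_zero_of_rank_eq_card (h S hS) ?_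
  rw [vecMul_fromCols, vecMul_fromCols, ← vecMul_vecMul, hA, vecMul_vecMul, hES, hE, hB,
    vecMul_zero]
  simp

theorem StronglyStabilizable.eq_zero_of_vecMul {E A : Matrix n n ℝ} {B : Matrix n m ℝ}
    (h : StronglyStabilizable E A B) {lam : ℂ} (hlam : 0 ≤ lam.re) {v : n → ℂ}
    (hv : v ᵥ* (lam • E.toC - A.toC) = 0) (hB : v ᵥ* B.toC = 0) : v = 0 :=
  eq_zero_of_vecMul_eq_zero_of_rank_eq_card (h.2 lam hlam) (by simp [hv, hB])

theorem StronglyDetectable.eq_zero_of_mulVec_eq_zero {E A : Matrix n n ℝ} {C : Matrix m n ℝ}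
    (h : StronglyDetectable E A C) {lam : ℂ} (hlam : 0 ≤ lam.re) {v : n → ℂ}
    (hv : (lam • E.toC - A.toC) *ᵥ v = 0) (hC : C.toC *ᵥ v = 0) : v = 0 :=
  StronglyStabilizable.eq_zero_of_vecMul h hlam (by rwa [← vecMul_transpose] at hv)
    (by rwa [← vecMul_transpose] at hC)

theorem StronglyDetectable.eq_zero_of_mulVec_eq_mulVec {E A : Matrix n n ℝ} {C : Matrix m n ℝ}
    (h : StronglyDetectable E A C) {u w : n → ℝ} (hE : E *ᵥ u = 0) (hA : A *ᵥ u = E *ᵥ w)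
    (hC : C *ᵥ u = 0) : u = 0 :=
  h.1.eq_zero_of_vecMul (w := w) (by rwa [vecMul_transpose])
    (by rwa [vecMul_transpose, vecMul_transpose]) (by rwa [vecMul_transpose])

end Systems

namespace Matrix

open scoped ComplexOrder

variable {𝕜 n m : Type*} [RCLike 𝕜] [Fintype n] [Fintype m]

theorem re_dotProduct_mulVec_eq_zero_of_conjTranspose_eq_neg {J : Matrix n n 𝕜} (hJ : Jᴴ = -J)
    (x : n → 𝕜) : RCLike.re (star x ⬝ᵥ (J *ᵥ x)) = 0 := by
  have h : star (star x ⬝ᵥ (J *ᵥ x)) = -(star x ⬝ᵥ (J *ᵥ x)) := by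
    rw [← star_dotProduct, star_mulVec, ← dotProduct_mulVec, hJ, neg_mulVec, dotProduct_neg]
  have hre := congrArg RCLike.re h
  rw [RCLike.star_def, RCLike.conj_re, map_neg] at hre
  linarith

theorem conjTranspose_mulVec_eq_zero_of_re_nonneg {J R : Matrix n n 𝕜} (B : Matrix n m 𝕜)
    (hJ : Jᴴ = -J) (hR : R.PosSemidef) {x : n → 𝕜}
    (hx : 0 ≤ RCLike.re (star x ⬝ᵥ ((J - (R + B * Bᴴ)) *ᵥ x))) : Bᴴ *ᵥ x = 0 := by
  have hBB : star x ⬝ᵥ ((B * Bᴴ) *ᵥ x) = star (Bᴴ *ᵥ x) ⬝ᵥ (Bᴴ *ᵥ x) := by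
    rw [← mulVec_mulVec, dotProduct_mulVec, star_mulVec, conjTranspose_conjTranspose]
  have hsplit : RCLike.re (star x ⬝ᵥ ((J - (R + B * Bᴴ)) *ᵥ x)) =
      -RCLike.re (star x ⬝ᵥ (R *ᵥ x)) - RCLike.re (star (Bᴴ *ᵥ x) ⬝ᵥ (Bᴴ *ᵥ x)) := by
    rw [sub_mulVec, add_mulVec, dotProduct_sub, dotProduct_add, hBB, map_sub, map_add,
      re_dotProduct_mulVec_eq_zero_of_conjTranspose_eq_neg hJ]
    ring
  obtain ⟨hre, him⟩ := RCLike.nonneg_iff.mp (dotProduct_star_self_nonneg (Bᴴ *ᵥ x))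
  have hre0 : RCLike.re (star (Bᴴ *ᵥ x) ⬝ᵥ (Bᴴ *ᵥ x)) = 0 := by
    linarith [hR.re_dotProduct_nonneg x]
  exact dotProduct_star_self_eq_zero.mp (RCLike.ext (by simpa using hre0) (by simpa using him))

end Matrix

section PortHamiltonian

open Matrix
open scoped ComplexOrder

variable {n m : Type*} [Fintype n] [Fintype m] {E J R Q : Matrix n n ℝ} {B : Matrix n m ℝ}

theorem transpose_mul_eq_transpose_mul_of_posSemidef (hEQ : (Eᵀ * Q).PosSemidef) :
    Qᵀ * E = Eᵀ * Q := by
  simpa [transpose_mul] using hEQ.1.eq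

theorem toC_transpose_mulVec_eq_zero_of_closedLoop_mulVec_eq_zero (hJ : Jᵀ = -J)
    (hR : R.PosSemidef) (hEQ : (Eᵀ * Q).PosSemidef) {lam : ℂ} (hlam : 0 ≤ lam.re) {v : n → ℂ}
    (hv : (lam • E.toC - ((J - (R + B * Bᵀ)) * Q).toC) *ᵥ v = 0) :
    Bᵀ.toC *ᵥ (Q.toC *ᵥ v) = 0 := by
  classical
  have hAv : (J - (R + B * Bᵀ)).toC *ᵥ (Q.toC *ᵥ v) = lam • (E.toC *ᵥ v) := by
    rw [sub_mulVec, sub_eq_zero, smul_mulVec] at hv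
    rw [mulVec_mulVec, ← toC_mul, hv]
  have hEv : star (Q.toC *ᵥ v) ⬝ᵥ (E.toC *ᵥ v) = star v ⬝ᵥ ((Eᵀ * Q).toC *ᵥ v) := by
    rw [← transpose_mul_eq_transpose_mul_of_posSemidef hEQ, toC_mul, ← mulVec_mulVec,
      dotProduct_mulVec, star_mulVec, conjTranspose_toC]
    simp only [dotProduct_mulVec]
  obtain ⟨hre, him⟩ := RCLike.nonneg_iff.mp (hEQ.toC.dotProduct_mulVec_nonneg v)
  rw [← conjTranspose_toC]
  refine conjTranspose_mulVec_eq_zero_of_re_nonneg B.toC (J := J.toC) ?_ hR.toC ?_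
  · rw [conjTranspose_toC, hJ, toC_neg]
  · rw [conjTranspose_toC, ← toC_mul, ← toC_add, ← toC_sub, hAv, dotProduct_smul, hEv]
    simp only [smul_eq_mul, RCLike.mul_re]
    rw [him, mul_zero, sub_zero]
    exact mul_nonneg hlam hre

theorem transpose_mulVec_eq_zero_of_closedLoop_mulVec_eq (hJ : Jᵀ = -J) (hR : R.PosSemidef)
    (hQE : Qᵀ * E = Eᵀ * Q) {u w : n → ℝ} (hE : E *ᵥ u = 0)
    (hA : ((J - (R + B * Bᵀ)) * Q) *ᵥ u = E *ᵥ w) : Bᵀ *ᵥ (Q *ᵥ u) = 0 := by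
  have hAx : (Q *ᵥ u) ⬝ᵥ (((J - (R + B * Bᵀ)) * Q) *ᵥ u) = 0 := by
    rw [hA, dotProduct_comm, dotProduct_mulVec, ← mulVec_transpose, mulVec_mulVec, hQE,
      ← mulVec_mulVec, mulVec_transpose, ← dotProduct_mulVec, hE, dotProduct_zero]
  rw [← conjTranspose_eq_transpose_of_trivial]
  refine conjTranspose_mulVec_eq_zero_of_re_nonneg B
    (by rwa [conjTranspose_eq_transpose_of_trivial]) hR ?_
  simp [conjTranspose_eq_transpose_of_trivial, hAx]

variable [DecidableEq n]

theorem pencilStable_closedLoop (hJ : Jᵀ = -J) (hR : R.PosSemidef) (hEQ : (Eᵀ * Q).PosSemidef)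
    (hdet : StronglyDetectable E ((J - R) * Q) (Bᵀ * Q)) :
    PencilStable E ((J - (R + B * Bᵀ)) * Q) := by
  have hA : (J - R) * Q = (J - (R + B * Bᵀ)) * Q + B * (Bᵀ * Q) := by
    simp only [sub_mul, add_mul, Matrix.mul_assoc]
    abel
  refine pencilStable_of_forall_mulVec (fun lam v hlam hv => ?_) (fun u w hEu hAu => ?_)
  · have hBx := toC_transpose_mulVec_eq_zero_of_closedLoop_mulVec_eq_zero hJ hR hEQ hlam hv
    refine hdet.eq_zero_of_mulVec_eq_zero hlam ?_ (by rw [toC_mul, ← mulVec_mulVec, hBx])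
    rw [hA, toC_add, ← sub_sub, sub_mulVec, hv, toC_mul, toC_mul, ← mulVec_mulVec,
      ← mulVec_mulVec, hBx, mulVec_zero, sub_zero]
  · have hBx := transpose_mulVec_eq_zero_of_closedLoop_mulVec_eq hJ hR
      (transpose_mul_eq_transpose_mul_of_posSemidef hEQ) hEu hAu
    refine hdet.eq_zero_of_mulVec_eq_mulVec hEu (w := w) ?_ (by rw [← mulVec_mulVec, hBx])
    rw [hA, add_mulVec, hAu, ← mulVec_mulVec, ← mulVec_mulVec, hBx, mulVec_zero, add_zero]

theorem inv_transpose_mul_transpose_mul {k : Type*} (hQ : IsUnit Q) (M : Matrix k n ℝ) :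
    (Q⁻¹)ᵀ * (M * Q)ᵀ = Mᵀ := by
  rw [← transpose_mul, mul_nonsing_inv_cancel_right _ _ ((isUnit_iff_isUnit_det Q).mp hQ)]

theorem filterGARE_inv_transpose (hJ : Jᵀ = -J) (hR : Rᵀ = R) (hQE : Qᵀ * E = Eᵀ * Q)
    (hQ : IsUnit Q) : FilterGARE E ((J - R) * Q) B (Bᵀ * Q) R (Q⁻¹)ᵀ := by
  have hQdet := (isUnit_iff_isUnit_det Q).mp hQ
  refine ⟨?_, ?_⟩
  · rw [transpose_transpose, inv_transpose_mul_transpose_mul hQ,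
      inv_transpose_mul_transpose_mul hQ, mul_nonsing_inv_cancel_right _ _ hQdet,
      Matrix.mul_assoc Bᵀᵀ, mul_nonsing_inv_cancel_right _ _ hQdet, transpose_sub, hJ, hR,
      transpose_transpose, two_smul]
    abel
  · calc E * (Q⁻¹)ᵀᵀ = (Q⁻¹)ᵀ * (Qᵀ * E) * Q⁻¹ := by
          rw [transpose_transpose, ← Matrix.mul_assoc, ← transpose_mul,
            mul_nonsing_inv _ hQdet, transpose_one, Matrix.one_mul]
      _ = (Q⁻¹)ᵀ * Eᵀ := by
          rw [hQE, ← Matrix.mul_assoc, Matrix.mul_assoc, mul_nonsing_inv _ hQdet, Matrix.mul_one]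

end PortHamiltonian

theorem Q_inv_transpose_is_stabilizing_filter_solution_general
    {n m : ℕ} (E J R Q : Matrix (Fin n) (Fin n) ℝ) (B : Matrix (Fin n) (Fin m) ℝ)
    (A C_ : _) (hA : A = (J - R) * Q) (hC : C_ = Bᵀ * Q)
    (hJ : Jᵀ = -J) (hR : R.PosSemidef) (hEQ : (Eᵀ * Q).PosSemidef)
    (hdet : StronglyDetectable E A C_)
    (hQ : IsUnit Q) :
    (A * Q⁻¹ + (Q⁻¹)ᵀ * Aᵀ - (Q⁻¹)ᵀ * C_ᵀ * C_ * Q⁻¹ + B * Bᵀ + (2 : ℝ) • R = 0 ∧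
        E * Q⁻¹ = (Q⁻¹)ᵀ * Eᵀ) ∧
      PencilStable E (A - (Q⁻¹)ᵀ * C_ᵀ * C_) := by
  subst hA hC
  have hclosed : (J - R) * Q - (Q⁻¹)ᵀ * (Bᵀ * Q)ᵀ * (Bᵀ * Q) = (J - (R + B * Bᵀ)) * Q := by
    rw [inv_transpose_mul_transpose_mul hQ, transpose_transpose]
    simp only [sub_mul, add_mul, Matrix.mul_assoc]
    abel
  have hsol : FilterStabilizing E ((J - R) * Q) B (Bᵀ * Q) R (Q⁻¹)ᵀ :=
    ⟨filterGARE_inv_transpose hJ (by simpa using hR.1.eq)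
        (transpose_mul_eq_transpose_mul_of_posSemidef hEQ) hQ,
      hclosed ▸ pencilStable_closedLoop hJ hR hEQ hdet⟩
  simpa only [FilterStabilizing, FilterGARE, transpose_transpose] using hsol

/-- Theorem `thm:solutionsOfNonsymmetricGAREs` (iii): if `Q` is
invertible, then `Q⁻ᵀ` is a stabilizing solution of the modified filter GARE. -/
theorem Q_inv_transpose_is_stabilizing_filter_solution
    {n m : ℕ} (E J R Q : Matrix (Fin n) (Fin n) ℝ) (B : Matrix (Fin n) (Fin m) ℝ)
    (A C_ : _) (hA : A = (J - R) * Q) (hC : C_ = Bᵀ * Q)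
    (hJ : Jᵀ = -J) (hR : R.PosSemidef) (hEQ : (Eᵀ * Q).PosSemidef)
    (hreg : PencilRegular E A)
    (hstab : StronglyStabilizable E A B)
    (hdet : StronglyDetectable E A C_)
    (hQ : IsUnit Q) :
    (A * Q⁻¹ + (Q⁻¹)ᵀ * Aᵀ - (Q⁻¹)ᵀ * C_ᵀ * C_ * Q⁻¹ + B * Bᵀ + (2 : ℝ) • R = 0 ∧
        E * Q⁻¹ = (Q⁻¹)ᵀ * Eᵀ) ∧
      PencilStable E (A - (Q⁻¹)ᵀ * C_ᵀ * C_) :=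
  Q_inv_transpose_is_stabilizing_filter_solution_general E J R Q B A C_ hA hC hJ hR hEQ hdet hQ
end
end

section
/- Let n, r, ℓ be given with 1 ≤ ℓ ≤ r ≤ n. Let Ẽ = [[I_r, 0],[0, 0]] ∈ ℝ^{n×n}, let J̃ ∈ ℝ^{n×n} be skew-symmetric, R̃ ∈ ℝ^{n×n} symmetric positive semidefinite, B̃ ∈ ℝ^{n×m}, and let Q̃ ∈ ℝ^{n×n} be invertible with ẼᵀQ̃ = Q̃ᵀẼ positive semidefinite and, in the block partition with diagonal block sizes ℓ, r−ℓ, n−r, Q̃ = [[Q̃₁₁, 0, 0],[0, Q̃₂₂, 0],[Q̃₃₁, Q̃₃₂, Q̃₃₃]]. Set Ã := (J̃−R̃)Q̃ and C̃ := B̃ᵀQ̃, and let K_ℓ = [[I_ℓ, 0, 0],[0, 0, I_{n−r}]] ∈ ℝ^{(ℓ+n−r)×n}. Then the reduced-order model (E_r, A_r, B_r, C_r) := (K_ℓẼK_ℓᵀ, K_ℓÃK_ℓᵀ, K_ℓB̃, C̃K_ℓᵀ) is port-Hamiltonian: with J_r := K_ℓJ̃K_ℓᵀ, R_r := K_ℓR̃K_ℓᵀ,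 and Q_r := [[Q̃₁₁, 0],[Q̃₃₁, Q̃₃₃]], one has J_rᵀ = −J_r, R_r = R_rᵀ positive semidefinite, A_r = (J_r − R_r)Q_r, C_r = B_rᵀQ_r, and E_rᵀQ_r = Q_rᵀE_r positive semidefinite. -/
/-!
Port-Hamiltonian structure survives the congruence `M ↦ W M Wᵀ` whenever `Q Wᵀ = Wᵀ Q_r` for some
`Q_r`: congruence preserves skew-symmetry of `J` and semidefiniteness of `R` and `EᵀQ`, and the
intertwining relation moves `Q` past `Wᵀ` in `W (J - R) Q Wᵀ`, `BᵀQ Wᵀ` and `W Eᵀ Wᵀ Q_r`.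
For `W = K_ℓ` the relation `Q̃ K_ℓᵀ = K_ℓᵀ Q_r` holds because the first and last block columns
of `Q̃` vanish in the middle block row.
-/

open Matrix

noncomputable section

-- The structure matrices are part of the data; `(Eᵀ * Q).PosSemidef` includes `EᵀQ = QᵀE`.
def IsPortHamiltonian {n m : Type*} [Fintype n] (E A : Matrix n n ℝ) (B : Matrix n m ℝ)
    (C : Matrix m n ℝ) (J R Q : Matrix n n ℝ) : Prop :=
  Jᵀ = -J ∧ R.PosSemidef ∧ A = (J - R) * Q ∧ C = Bᵀ * Q ∧ (Eᵀ * Q).PosSemidef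

lemma Matrix.mul_mul_transpose_of_transpose_eq_neg {α n k : Type*} [CommRing α] [Fintype n]
    {J : Matrix n n α} (hJ : Jᵀ = -J) (W : Matrix k n α) :
    (W * J * Wᵀ)ᵀ = -(W * J * Wᵀ) := by
  rw [transpose_mul, transpose_mul, transpose_transpose, hJ, Matrix.neg_mul, Matrix.mul_neg,
    Matrix.mul_assoc]

section Congruence

variable {n k : Type*} [Fintype n] [Fintype k]

lemma Matrix.PosSemidef.mul_mul_transpose_same {A : Matrix n n ℝ} (hA : A.PosSemidef)
    (W : Matrix k n ℝ) : (W * A * Wᵀ).PosSemidef := by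
  simpa only [conjTranspose_eq_transpose_of_trivial] using hA.mul_mul_conjTranspose_same W

theorem IsPortHamiltonian.mul_mul_transpose {m : Type*} {E A J R Q : Matrix n n ℝ}
    {B : Matrix n m ℝ} {C : Matrix m n ℝ} (h : IsPortHamiltonian E A B C J R Q)
    {W : Matrix k n ℝ} {Qr : Matrix k k ℝ} (hQ : Q * Wᵀ = Wᵀ * Qr) :
    IsPortHamiltonian (W * E * Wᵀ) (W * A * Wᵀ) (W * B) (C * Wᵀ)
      (W * J * Wᵀ) (W * R * Wᵀ) Qr := by
  obtain ⟨hJ, hR, rfl, rfl, hEQ⟩ := h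
  refine ⟨mul_mul_transpose_of_transpose_eq_neg hJ W, hR.mul_mul_transpose_same W, ?_, ?_, ?_⟩
  · rw [Matrix.mul_assoc W, Matrix.mul_assoc, hQ, ← Matrix.sub_mul, ← Matrix.mul_sub,
      ← Matrix.mul_assoc, ← Matrix.mul_assoc]
  · rw [Matrix.mul_assoc, hQ, transpose_mul, Matrix.mul_assoc]
  · have hE : (W * E * Wᵀ)ᵀ * Qr = W * (Eᵀ * Q) * Wᵀ := by
      rw [transpose_mul, transpose_mul, transpose_transpose, Matrix.mul_assoc, Matrix.mul_assoc,
        ← hQ, Matrix.mul_assoc, Matrix.mul_assoc]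
    exact hE ▸ hEQ.mul_mul_transpose_same W

end Congruence

lemma fromBlocks_mul_truncation_transpose {α l p q : Type*} [CommRing α] [Fintype l] [Fintype p]
    [Fintype q] [DecidableEq l] [DecidableEq q] (Q11 : Matrix l l α) (Q22 : Matrix p p α)
    (Q31 : Matrix q l α) (Q32 : Matrix q p α) (Q33 : Matrix q q α) :
    fromBlocks Q11 0 (fromRows 0 Q31) (fromBlocks Q22 0 Q32 Q33) *
        (fromBlocks 1 0 0 (fromCols 0 1) : Matrix (l ⊕ q) (l ⊕ (p ⊕ q)) α)ᵀ =
      (fromBlocks 1 0 0 (fromCols 0 1) : Matrix (l ⊕ q) (l ⊕ (p ⊕ q)) α)ᵀ *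
        fromBlocks Q11 0 Q31 Q33 := by
  simp [fromBlocks_transpose, transpose_fromCols, fromBlocks_multiply, fromBlocks_mul_fromRows]

-- Block sizes: `l = ℓ`, `p = r - ℓ`, `q = n - r`.
theorem truncated_system_is_port_Hamiltonian_general
    {l p q m : ℕ}
    (Jt Rt : Matrix (Fin l ⊕ (Fin p ⊕ Fin q)) (Fin l ⊕ (Fin p ⊕ Fin q)) ℝ)
    (Bt : Matrix (Fin l ⊕ (Fin p ⊕ Fin q)) (Fin m) ℝ)
    (Q11 : Matrix (Fin l) (Fin l) ℝ) (Q22 : Matrix (Fin p) (Fin p) ℝ)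
    (Q31 : Matrix (Fin q) (Fin l) ℝ) (Q32 : Matrix (Fin q) (Fin p) ℝ)
    (Q33 : Matrix (Fin q) (Fin q) ℝ)
    (Et Qt At Ct : _)
    -- Q̃ = [[Q̃₁₁, 0, 0],[0, Q̃₂₂, 0],[Q̃₃₁, Q̃₃₂, Q̃₃₃]]
    (hQt : Qt = Matrix.fromBlocks Q11 0 (Matrix.fromRows 0 Q31)
      (Matrix.fromBlocks Q22 0 Q32 Q33))
    (hAt : At = (Jt - Rt) * Qt) (hCt : Ct = Btᵀ * Qt)
    (hJ : Jtᵀ = -Jt) (hR : Rt.PosSemidef)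
    (hEQ : (Etᵀ * Qt).PosSemidef)
    -- the truncation matrix K_ℓ
    (K : Matrix (Fin l ⊕ Fin q) (Fin l ⊕ (Fin p ⊕ Fin q)) ℝ)
    (hK : K = Matrix.fromBlocks (1 : Matrix (Fin l) (Fin l) ℝ) 0 0
      (Matrix.fromCols (0 : Matrix (Fin q) (Fin p) ℝ) (1 : Matrix (Fin q) (Fin q) ℝ)))
    (Er Ar Br Cr Jr Rr Qr : _)
    (hEr : Er = K * Et * Kᵀ) (hAr : Ar = K * At * Kᵀ)
    (hBr : Br = K * Bt) (hCr : Cr = Ct * Kᵀ)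
    (hJr : Jr = K * Jt * Kᵀ) (hRr : Rr = K * Rt * Kᵀ)
    (hQr : Qr = Matrix.fromBlocks Q11 0 Q31 Q33) :
    Jrᵀ = -Jr ∧ Rr.PosSemidef ∧ Ar = (Jr - Rr) * Qr ∧ Cr = Brᵀ * Qr ∧
      (Erᵀ * Qr).PosSemidef := by
  subst hAt hCt hK hEr hAr hBr hCr hJr hRr hQt hQr
  exact IsPortHamiltonian.mul_mul_transpose ⟨hJ, hR, rfl, rfl, hEQ⟩
    (fromBlocks_mul_truncation_transpose Q11 Q22 Q31 Q32 Q33)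

/-- Theorem `thm:rom_is_ph`: truncation of a balanced semi-explicit
port-Hamiltonian realization (with the indicated block structure of `Q̃`) yields again a
port-Hamiltonian reduced-order model.  Block sizes: `l = ℓ`, `p = r - ℓ`, `q = n - r`. -/
theorem truncated_system_is_port_Hamiltonian
    {l p q m : ℕ} (hl : 1 ≤ l)
    (Jt Rt : Matrix (Fin l ⊕ (Fin p ⊕ Fin q)) (Fin l ⊕ (Fin p ⊕ Fin q)) ℝ)
    (Bt : Matrix (Fin l ⊕ (Fin p ⊕ Fin q)) (Fin m) ℝ)
    (Q11 : Matrix (Fin l) (Fin l) ℝ) (Q22 : Matrix (Fin p) (Fin p) ℝ)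
    (Q31 : Matrix (Fin q) (Fin l) ℝ) (Q32 : Matrix (Fin q) (Fin p) ℝ)
    (Q33 : Matrix (Fin q) (Fin q) ℝ)
    (Et Qt At Ct : _)
    -- Ẽ = [[I_r, 0],[0, 0]] with r = l + p
    (hEt : Et = Matrix.fromBlocks (1 : Matrix (Fin l) (Fin l) ℝ) 0 0
      (Matrix.fromBlocks (1 : Matrix (Fin p) (Fin p) ℝ) 0 0 (0 : Matrix (Fin q) (Fin q) ℝ)))
    -- Q̃ = [[Q̃₁₁, 0, 0],[0, Q̃₂₂, 0],[Q̃₃₁, Q̃₃₂, Q̃₃₃]]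
    (hQt : Qt = Matrix.fromBlocks Q11 0 (Matrix.fromRows 0 Q31)
      (Matrix.fromBlocks Q22 0 Q32 Q33))
    (hAt : At = (Jt - Rt) * Qt) (hCt : Ct = Btᵀ * Qt)
    (hJ : Jtᵀ = -Jt) (hR : Rt.PosSemidef)
    (hQinv : IsUnit Qt) (hEQ : (Etᵀ * Qt).PosSemidef)
    -- the truncation matrix K_ℓ
    (K : Matrix (Fin l ⊕ Fin q) (Fin l ⊕ (Fin p ⊕ Fin q)) ℝ)
    (hK : K = Matrix.fromBlocks (1 : Matrix (Fin l) (Fin l) ℝ) 0 0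
      (Matrix.fromCols (0 : Matrix (Fin q) (Fin p) ℝ) (1 : Matrix (Fin q) (Fin q) ℝ)))
    (Er Ar Br Cr Jr Rr Qr : _)
    (hEr : Er = K * Et * Kᵀ) (hAr : Ar = K * At * Kᵀ)
    (hBr : Br = K * Bt) (hCr : Cr = Ct * Kᵀ)
    (hJr : Jr = K * Jt * Kᵀ) (hRr : Rr = K * Rt * Kᵀ)
    (hQr : Qr = Matrix.fromBlocks Q11 0 Q31 Q33) :
    Jrᵀ = -Jr ∧ Rr.PosSemidef ∧ Ar = (Jr - Rr) * Qr ∧ Cr = Brᵀ * Qr ∧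
      (Erᵀ * Qr).PosSemidef :=
  truncated_system_is_port_Hamiltonian_general Jt Rt Bt Q11 Q22 Q31 Q32 Q33 Et Qt At Ct hQt hAt hCt
    hJ hR hEQ K hK Er Ar Br Cr Jr Rr Qr hEr hAr hBr hCr hJr hRr hQr
end
end

section
/- Consider a port-Hamiltonian descriptor system given by E, J, R, Q ∈ ℝ^{n×n} and B ∈ ℝ^{n×m} with Jᵀ = −J, R = Rᵀ ⪰ 0, EᵀQ = QᵀE ⪰ 0, A := (J−R)Q, C := BᵀQ, such that (E,A) is regular, (E,A,B) is strongly stabilizable, and (E,A,C) is strongly detectable. Let 𝒫c and 𝒫f be stabilizing solutions of the control GARE and modified filter GARE such that I_n + 𝒫f𝒫cᵀ is invertible, and set A_Pc := A − BBᵀ𝒫c and ℒ := (I_n + 𝒫f𝒫cᵀ)⁻¹𝒫f. Then A_Pcℒᵀ + ℒA_Pcᵀ + BBᵀ ⪯ 0 and Eℒᵀ = ℒEᵀ; moreover A_Pcᵀ𝒫c + 𝒫cᵀA_Pc + [−𝒫cᵀB, Cᵀ]·[−𝒫cᵀB, Cᵀ]ᵀ = 0 and Eᵀ𝒫c = 𝒫cᵀE.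 -/
/-! Put `M := 1 + 𝒫f 𝒫cᵀ`, so that `M ℒ = 𝒫f`. Congruence by `M` turns `A_Pc ℒᵀ + ℒ A_Pcᵀ + BBᵀ`
into `𝒫f (control GARE) 𝒫fᵀ + (filter GARE) - 2R = -2R`, and `Eℒᵀ - ℒEᵀ` into
`(E𝒫fᵀ - 𝒫fEᵀ) + 𝒫f (𝒫cᵀE - Eᵀ𝒫c) 𝒫fᵀ = 0`; as `M` is invertible, both claims on `ℒ` follow.
The claims on `𝒫c` are the control GARE rewritten in terms of `A_Pc`. -/

open Matrix

noncomputable section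

section CommRing

variable {n m : Type*} [Fintype n] [Fintype m] {α : Type*} [CommRing α]

theorem transpose_closedLoop (A Pc : Matrix n n α) (B : Matrix n m α) :
    (A - B * Bᵀ * Pc)ᵀ = Aᵀ - Pcᵀ * (B * Bᵀ) := by
  rw [transpose_sub, transpose_mul, transpose_mul, transpose_transpose]

theorem conj_mul_transpose_sub_eq_zero [DecidableEq n] {E Pc Pf L : Matrix n n α}
    (hc : Eᵀ * Pc = Pcᵀ * E) (hf : E * Pfᵀ = Pf * Eᵀ) (hL : (1 + Pf * Pcᵀ) * L = Pf) :
    (1 + Pf * Pcᵀ) * (E * Lᵀ - L * Eᵀ) * (1 + Pf * Pcᵀ)ᵀ = 0 := by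
  have hLT : Lᵀ * (1 + Pf * Pcᵀ)ᵀ = Pfᵀ := by rw [← transpose_mul, hL]
  calc (1 + Pf * Pcᵀ) * (E * Lᵀ - L * Eᵀ) * (1 + Pf * Pcᵀ)ᵀ
      = (1 + Pf * Pcᵀ) * E * (Lᵀ * (1 + Pf * Pcᵀ)ᵀ)
          - (1 + Pf * Pcᵀ) * L * Eᵀ * (1 + Pf * Pcᵀ)ᵀ := by noncomm_ring
    _ = (1 + Pf * Pcᵀ) * E * Pfᵀ - Pf * Eᵀ * (1 + Pc * Pfᵀ) := by
        rw [hLT, hL, transpose_add, transpose_mul, transpose_transpose, transpose_one]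
    _ = (E * Pfᵀ - Pf * Eᵀ) + Pf * (Pcᵀ * E - Eᵀ * Pc) * Pfᵀ := by noncomm_ring
    _ = 0 := by rw [hf, hc, sub_self, sub_self, mul_zero, zero_mul, add_zero]

end CommRing

section Riccati

variable {n m p : Type*} [Fintype n] [DecidableEq n] [Fintype m] [Fintype p]
  {E A R Pc Pf L : Matrix n n ℝ} {B : Matrix n m ℝ} {C : Matrix p n ℝ}

theorem ControlGARE.closedLoop_lyapunov (h : ControlGARE E A B C Pc) :
    (A - B * Bᵀ * Pc)ᵀ * Pc + Pcᵀ * (A - B * Bᵀ * Pc) +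
      fromCols (-(Pcᵀ * B)) Cᵀ * (fromCols (-(Pcᵀ * B)) Cᵀ)ᵀ = 0 := by
  have hGARE := h.1
  have hBB : -(Pcᵀ * B) * (-(Pcᵀ * B))ᵀ = Pcᵀ * (B * Bᵀ) * Pc := by
    simp only [transpose_neg, Matrix.neg_mul, Matrix.mul_neg, neg_neg, transpose_mul,
      transpose_transpose, Matrix.mul_assoc]
  rw [Matrix.mul_assoc Pcᵀ B Bᵀ] at hGARE
  rw [transpose_fromCols, fromCols_mul_fromRows, hBB, transpose_transpose, transpose_closedLoop,
    ← hGARE]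
  generalize B * Bᵀ = G
  noncomm_ring

theorem conj_closedLoop_lyapunov_of_GARE (hc : ControlGARE E A B C Pc)
    (hf : FilterGARE E A B C R Pf) (hL : (1 + Pf * Pcᵀ) * L = Pf) :
    (1 + Pf * Pcᵀ) * ((A - B * Bᵀ * Pc) * Lᵀ + L * (A - B * Bᵀ * Pc)ᵀ + B * Bᵀ) *
      (1 + Pf * Pcᵀ)ᵀ = -((2 : ℝ) • R) := by
  have hcGARE := hc.1
  have hfGARE := hf.1
  rw [Matrix.mul_assoc Pcᵀ B Bᵀ] at hcGARE
  rw [Matrix.mul_assoc Pf Cᵀ C] at hfGARE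
  have hLT : Lᵀ * (1 + Pf * Pcᵀ)ᵀ = Pfᵀ := by rw [← transpose_mul, hL]
  have hMT : (1 + Pf * Pcᵀ)ᵀ = 1 + Pc * Pfᵀ := by
    rw [transpose_add, transpose_mul, transpose_transpose, transpose_one]
  calc (1 + Pf * Pcᵀ) * ((A - B * Bᵀ * Pc) * Lᵀ + L * (A - B * Bᵀ * Pc)ᵀ + B * Bᵀ) *
        (1 + Pf * Pcᵀ)ᵀ
      = (1 + Pf * Pcᵀ) * (A - B * Bᵀ * Pc) * (Lᵀ * (1 + Pf * Pcᵀ)ᵀ)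
          + (1 + Pf * Pcᵀ) * L * (A - B * Bᵀ * Pc)ᵀ * (1 + Pf * Pcᵀ)ᵀ
          + (1 + Pf * Pcᵀ) * (B * Bᵀ) * (1 + Pf * Pcᵀ)ᵀ := by noncomm_ring
    _ = Pf * (Aᵀ * Pc + Pcᵀ * A - Pcᵀ * (B * Bᵀ) * Pc + Cᵀ * C) * Pfᵀ
          + (A * Pfᵀ + Pf * Aᵀ - Pf * (Cᵀ * C) * Pfᵀ + B * Bᵀ + (2 : ℝ) • R)
          - (2 : ℝ) • R := by
        rw [hLT, hL, hMT, transpose_closedLoop]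
        generalize B * Bᵀ = G
        generalize Cᵀ * C = K
        noncomm_ring
    _ = -((2 : ℝ) • R) := by
        rw [hcGARE, hfGARE, mul_zero, zero_mul, zero_add, zero_sub]

end Riccati

theorem coprime_factor_lyapunov_inequalities_general
    {n m : ℕ} (E R Q : Matrix (Fin n) (Fin n) ℝ) (B : Matrix (Fin n) (Fin m) ℝ)
    (A C_ : _) (hC : C_ = Bᵀ * Q)
    (hR : R.PosSemidef)
    (Pc Pf : Matrix (Fin n) (Fin n) ℝ)
    (hPc : ControlStabilizing E A B C_ Pc)
    (hPf : FilterStabilizing E A B C_ R Pf)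
    (hinv : IsUnit (1 + Pf * Pcᵀ))
    (APc L : Matrix (Fin n) (Fin n) ℝ)
    (hAPc : APc = A - B * Bᵀ * Pc)
    (hL : L = (1 + Pf * Pcᵀ)⁻¹ * Pf) :
    (-(APc * Lᵀ + L * APcᵀ + B * Bᵀ)).PosSemidef ∧
    E * Lᵀ = L * Eᵀ ∧
    APcᵀ * Pc + Pcᵀ * APc +
        Matrix.fromCols (-(Pcᵀ * B)) C_ᵀ * (Matrix.fromCols (-(Pcᵀ * B)) C_ᵀ)ᵀ = 0 ∧
    Eᵀ * Pc = Pcᵀ * E := by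
  obtain ⟨hc, -⟩ := hPc
  obtain ⟨hf, -⟩ := hPf
  have hML : (1 + Pf * Pcᵀ) * L = Pf := by
    rw [hL, mul_nonsing_inv_cancel_left _ _ ((isUnit_iff_isUnit_det _).mp hinv)]
  subst hAPc
  refine ⟨?_, ?_, hc.closedLoop_lyapunov, hc.2⟩
  · rw [← hinv.posSemidef_star_right_conjugate_iff, star_eq_conjTranspose,
      conjTranspose_eq_transpose_of_trivial, mul_neg, neg_mul,
      conj_closedLoop_lyapunov_of_GARE hc hf hML, neg_neg]
    exact hR.smul zero_le_two
  · have h := conj_mul_transpose_sub_eq_zero hc.2 hf.2 hML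
    rw [((isUnit_transpose _).mpr hinv).mul_left_eq_zero, hinv.mul_right_eq_zero] at h
    exact sub_eq_zero.mp h

/-- Theorem `thm:nrcf_lyap`: the matrices `ℒ = (I + 𝒫f𝒫cᵀ)⁻¹𝒫f` and
`𝒫c` satisfy the generalized Lyapunov (in)equalities associated with the normalized right
coprime factorization. -/
theorem coprime_factor_lyapunov_inequalities
    {n m : ℕ} (E J R Q : Matrix (Fin n) (Fin n) ℝ) (B : Matrix (Fin n) (Fin m) ℝ)
    (A C_ : _) (hA : A = (J - R) * Q) (hC : C_ = Bᵀ * Q)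
    (hJ : Jᵀ = -J) (hR : R.PosSemidef) (hEQ : (Eᵀ * Q).PosSemidef)
    (hreg : PencilRegular E A)
    (hstab : StronglyStabilizable E A B)
    (hdet : StronglyDetectable E A C_)
    (Pc Pf : Matrix (Fin n) (Fin n) ℝ)
    (hPc : ControlStabilizing E A B C_ Pc)
    (hPf : FilterStabilizing E A B C_ R Pf)
    (hinv : IsUnit (1 + Pf * Pcᵀ))
    (APc L : Matrix (Fin n) (Fin n) ℝ)
    (hAPc : APc = A - B * Bᵀ * Pc)
    (hL : L = (1 + Pf * Pcᵀ)⁻¹ * Pf) :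
    (-(APc * Lᵀ + L * APcᵀ + B * Bᵀ)).PosSemidef ∧
    E * Lᵀ = L * Eᵀ ∧
    APcᵀ * Pc + Pcᵀ * APc +
        Matrix.fromCols (-(Pcᵀ * B)) C_ᵀ * (Matrix.fromCols (-(Pcᵀ * B)) C_ᵀ)ᵀ = 0 ∧
    Eᵀ * Pc = Pcᵀ * E :=
  coprime_factor_lyapunov_inequalities_general E R Q B A C_ hC hR Pc Pf hPc hPf hinv APc L hAPc hL
end
end

section
/- Consider a port-Hamiltonian descriptor system given by E, J, R, Q ∈ ℝ^{n×n} and B ∈ ℝ^{n×m} with Jᵀ = −J, R = Rᵀ ⪰ 0, EᵀQ = QᵀE ⪰ 0, A := (J−R)Q, C := BᵀQ, such that (E,A) is regular, (E,A,B) is strongly stabilizable, (E,A,C) is strongly detectable, and Q is invertible. Let S, T ∈ GL(n,ℝ) be such that SET⁻¹ = [[I_r, 0],[0, 0]] (r = rank E) and S(A−BC)T⁻¹ = [[A₁₁, 0],[0, I_{n−r}]]; write SB = [B₁; B₂], CT⁻¹ = [C₁, C₂]. Consider the KYP LMI for the original system: EᵀX = XᵀE and [xᵀ uᵀ]·[[−AᵀX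 − XᵀA, Cᵀ − XᵀB],[C − BᵀX, 0]]·[x; u] ≥ 0 for all (x,u) ∈ ℝ^{n+m} with Ax + Bu ∈ im(E); and the reduced KYP LMI 𝒲(X₁₁) := [[−A₁₁ᵀX₁₁ − X₁₁A₁₁ − 2C₁ᵀC₁, C₁ᵀ − X₁₁B₁ + 2C₁ᵀC₂B₂],[C₁ − B₁ᵀX₁₁ + 2B₂ᵀC₂ᵀC₁, −C₂B₂ − B₂ᵀC₂ᵀ − 2B₂ᵀC₂ᵀC₂B₂]] ⪰ 0 in symmetric X₁₁ ∈ ℝ^{r×r}. Then: (1) for every solution X ∈ ℝ^{n×n} of the original KYP LMI, the matrix X₁₁ := [I_r 0]·S⁻ᵀXT⁻¹·[I_r; 0] is symmetric and satisfies 𝒲(X₁₁) ⪰ 0; (2) conversely, for every symmetric X₁₁ ∈ ℝ^{r×r} with 𝒲(X₁₁) ⪰ 0 and arbitrary X₂₁ ∈ ℝ^{(n−r)×r}, X₂₂ ∈ ℝ^{(n−r)×(n−r)}, the matrix X := Sᵀ·[[X₁₁, 0],[X₂₁, X₂₂]]·T is a solution of the original KYP LMI. -/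
/-!
The KYP inequality is invariant under the change of coordinates
`(E, A, B, C, X) ↦ (S E T⁻¹, S A T⁻¹, S B, C T⁻¹, S⁻ᵀ X T⁻¹)`, so it suffices to treat
`E = diag(I, 0)` and `A = diag(A₁₁, I) + B̃ C̃`, where `B̃ = [B₁; B₂]`, `C̃ = [C₁, C₂]`. There
`EᵀX = XᵀE` says that `X₁₁` is symmetric and `X₁₂ = 0`, and the constraint `A x + B u ∈ im E`
says `x₂ = -B₂ v` with `v := C̃ x + u`. Parametrising the admissible pairs `(x, u)` by `(x₁, v)`,
twice the KYP form becomes the quadratic form of `𝒲(X₁₁)` at `(x₁, v)`, so nonnegativity on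
admissible pairs is exactly `𝒲(X₁₁) ⪰ 0`.
-/

open Matrix

noncomputable section

/-- The block matrix of the reduced KYP LMI (general-index case, after output feedback). -/
def redKYPgen {r q m : ℕ} (A11 : Matrix (Fin r) (Fin r) ℝ) (B1 : Matrix (Fin r) (Fin m) ℝ)
    (B2 : Matrix (Fin q) (Fin m) ℝ) (C1 : Matrix (Fin m) (Fin r) ℝ)
    (C2 : Matrix (Fin m) (Fin q) ℝ) (X : Matrix (Fin r) (Fin r) ℝ) :
    Matrix (Fin r ⊕ Fin m) (Fin r ⊕ Fin m) ℝ :=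
  Matrix.fromBlocks
    (-(A11ᵀ * X) - X * A11 - (2 : ℝ) • (C1ᵀ * C1))
    (C1ᵀ - X * B1 + (2 : ℝ) • (C1ᵀ * (C2 * B2)))
    (C1 - B1ᵀ * X + (2 : ℝ) • (B2ᵀ * C2ᵀ * C1))
    (-(C2 * B2) - B2ᵀ * C2ᵀ - (2 : ℝ) • (B2ᵀ * C2ᵀ * (C2 * B2)))

/-- `X` is a solution of the KYP LMI restricted to the system space. -/
def KYPSolution {ν μ : Type*} [Fintype ν] [DecidableEq ν] [Fintype μ]
    (E A : Matrix ν ν ℝ) (B : Matrix ν μ ℝ) (C : Matrix μ ν ℝ) (X : Matrix ν ν ℝ) : Prop :=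
  Eᵀ * X = Xᵀ * E ∧
    ∀ (x : ν → ℝ) (u : μ → ℝ),
      A.mulVec x + B.mulVec u ∈ LinearMap.range E.mulVecLin →
      0 ≤ x ⬝ᵥ ((-(Aᵀ * X) - Xᵀ * A).mulVec x) + x ⬝ᵥ ((Cᵀ - Xᵀ * B).mulVec u)
        + u ⬝ᵥ ((C - Bᵀ * X).mulVec x)

section KYP

variable {ν μ : Type*} [Fintype ν] [Fintype μ]

theorem kypForm_eq (A : Matrix ν ν ℝ) (B : Matrix ν μ ℝ) (C : Matrix μ ν ℝ) (X : Matrix ν ν ℝ)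
    (x : ν → ℝ) (u : μ → ℝ) :
    x ⬝ᵥ ((-(Aᵀ * X) - Xᵀ * A) *ᵥ x) + x ⬝ᵥ ((Cᵀ - Xᵀ * B) *ᵥ u) + u ⬝ᵥ ((C - Bᵀ * X) *ᵥ x)
      = 2 * (u ⬝ᵥ (C *ᵥ x) - (X *ᵥ x) ⬝ᵥ (A *ᵥ x + B *ᵥ u)) := by
  simp only [sub_mulVec, neg_mulVec, ← mulVec_mulVec, dotProduct_sub, dotProduct_neg,
    dotProduct_add, dotProduct_transpose_mulVec]
  linear_combination -dotProduct_comm (A *ᵥ x) (X *ᵥ x) - dotProduct_comm (B *ᵥ u) (X *ᵥ x)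

variable [DecidableEq ν]

theorem kypSolution_iff {E A : Matrix ν ν ℝ} {B : Matrix ν μ ℝ} {C : Matrix μ ν ℝ}
    {X : Matrix ν ν ℝ} :
    KYPSolution E A B C X ↔ Eᵀ * X = Xᵀ * E ∧
      ∀ x u, A *ᵥ x + B *ᵥ u ∈ LinearMap.range E.mulVecLin →
        (X *ᵥ x) ⬝ᵥ (A *ᵥ x + B *ᵥ u) ≤ u ⬝ᵥ (C *ᵥ x) := by
  refine and_congr_right fun _ => forall₂_congr fun x u => imp_congr_right fun _ => ?_
  rw [kypForm_eq]
  constructor <;> intro h <;> linarith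

theorem KYPSolution.conj {E A : Matrix ν ν ℝ} {B : Matrix ν μ ℝ} {C : Matrix μ ν ℝ}
    {X : Matrix ν ν ℝ} (hX : KYPSolution E A B C X) {S S' : Matrix ν ν ℝ} (hS : S' * S = 1)
    (T : Matrix ν ν ℝ) :
    KYPSolution (S * E * T) (S * A * T) (S * B) (C * T) (S'ᵀ * X * T) := by
  have hSt : Sᵀ * S'ᵀ = 1 := by rw [← transpose_mul, hS, transpose_one]
  rw [kypSolution_iff] at hX ⊢
  obtain ⟨hsym, hineq⟩ := hX
  refine ⟨?_, fun x u hmem => ?_⟩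
  · calc (S * E * T)ᵀ * (S'ᵀ * X * T) = Tᵀ * (Eᵀ * (Sᵀ * S'ᵀ) * X) * T := by
          simp only [transpose_mul, Matrix.mul_assoc]
      _ = Tᵀ * (Xᵀ * (S' * S) * E) * T := by rw [hSt, hS, Matrix.mul_one, Matrix.mul_one, hsym]
      _ = (S'ᵀ * X * T)ᵀ * (S * E * T) := by
          simp only [transpose_mul, transpose_transpose, Matrix.mul_assoc]
  have hS_mulVec : ∀ z, S' *ᵥ (S *ᵥ z) = z := fun z => by rw [mulVec_mulVec, hS, one_mulVec]
  have hrhs : (S * A * T) *ᵥ x + (S * B) *ᵥ u = S *ᵥ (A *ᵥ (T *ᵥ x) + B *ᵥ u) := by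
    simp only [mulVec_add, mulVec_mulVec, Matrix.mul_assoc]
  rw [hrhs] at hmem ⊢
  have hmem' : A *ᵥ (T *ᵥ x) + B *ᵥ u ∈ LinearMap.range E.mulVecLin := by
    obtain ⟨w, hw⟩ := hmem
    refine ⟨T *ᵥ w, ?_⟩
    rw [mulVecLin_apply] at hw ⊢
    rw [← hS_mulVec (A *ᵥ _ + _), ← hw, mulVec_mulVec, mulVec_mulVec, ← Matrix.mul_assoc,
      ← Matrix.mul_assoc, hS, Matrix.one_mul]
  calc ((S'ᵀ * X * T) *ᵥ x) ⬝ᵥ (S *ᵥ (A *ᵥ (T *ᵥ x) + B *ᵥ u))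
      = (X *ᵥ (T *ᵥ x)) ⬝ᵥ (A *ᵥ (T *ᵥ x) + B *ᵥ u) := by
        rw [← mulVec_mulVec, ← mulVec_mulVec, dotProduct_comm, dotProduct_transpose_mulVec,
          hS_mulVec, dotProduct_comm]
    _ ≤ u ⬝ᵥ (C *ᵥ (T *ᵥ x)) := hineq _ u hmem'
    _ = u ⬝ᵥ ((C * T) *ᵥ x) := by rw [mulVec_mulVec]

theorem kypSolution_conj_iff {E A : Matrix ν ν ℝ} {B : Matrix ν μ ℝ} {C : Matrix μ ν ℝ}
    {X S T : Matrix ν ν ℝ} (hS : IsUnit S) (hT : IsUnit T) :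
    KYPSolution (S * E * T⁻¹) (S * A * T⁻¹) (S * B) (C * T⁻¹) (S⁻¹ᵀ * X * T⁻¹) ↔
      KYPSolution E A B C X := by
  rw [isUnit_iff_isUnit_det] at hS hT
  refine ⟨fun h => ?_, fun h => h.conj (nonsing_inv_mul S hS) T⁻¹⟩
  have hSt : IsUnit Sᵀ.det := by rwa [det_transpose]
  simpa only [Matrix.mul_assoc, nonsing_inv_mul_cancel_left _ _ hS, nonsing_inv_mul _ hT,
    Matrix.mul_one, transpose_nonsing_inv, mul_nonsing_inv_cancel_left _ _ hSt]
    using h.conj (mul_nonsing_inv S hS) T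

end KYP

section Blocks

variable {n o : Type*} [Fintype n] [Fintype o]

theorem fromCols_one_zero_mul_mul_fromRows_one_zero [DecidableEq n] {R : Type*} [Semiring R]
    (M : Matrix (n ⊕ o) (n ⊕ o) R) :
    fromCols (1 : Matrix n n R) (0 : Matrix n o R) * M
        * fromRows (1 : Matrix n n R) (0 : Matrix o n R) = M.toBlocks₁₁ := by
  ext i j
  simp [mul_apply, Fintype.sum_sum_type, one_apply, toBlocks₁₁]

theorem fromBlocks_one_zero_transpose_mul_comm_iff [DecidableEq n] {R : Type*} [CommRing R]
    {X₁₁ : Matrix n n R} {X₁₂ : Matrix n o R} {X₂₁ : Matrix o n R} {X₂₂ : Matrix o o R} :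
    (fromBlocks 1 0 0 0 : Matrix (n ⊕ o) (n ⊕ o) R)ᵀ * fromBlocks X₁₁ X₁₂ X₂₁ X₂₂ =
        (fromBlocks X₁₁ X₁₂ X₂₁ X₂₂)ᵀ * fromBlocks 1 0 0 0 ↔
      X₁₁ᵀ = X₁₁ ∧ X₁₂ = 0 := by
  simp only [fromBlocks_transpose, fromBlocks_multiply, transpose_one, transpose_zero,
    Matrix.one_mul, Matrix.mul_one, Matrix.zero_mul, Matrix.mul_zero, add_zero, fromBlocks_inj]
  constructor
  · rintro ⟨h₁₁, h₁₂, -, -⟩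
    exact ⟨h₁₁.symm, h₁₂⟩
  · rintro ⟨h₁₁, rfl⟩
    exact ⟨h₁₁.symm, rfl, transpose_zero.symm, trivial⟩

theorem mem_range_fromBlocks_one_zero_iff [DecidableEq n] {R : Type*} [CommSemiring R]
    (z : n ⊕ o → R) :
    z ∈ LinearMap.range (fromBlocks 1 0 0 0 : Matrix (n ⊕ o) (n ⊕ o) R).mulVecLin ↔
      z ∘ Sum.inr = 0 := by
  refine ⟨fun ⟨w, hw⟩ => by simp [← hw, fromBlocks_mulVec], fun hz => ⟨z, ?_⟩⟩
  ext (i | i)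
  · simp [fromBlocks_mulVec]
  · simpa [fromBlocks_mulVec] using (congrFun hz i).symm

theorem fromBlocks_add_fromRows_mul_fromCols_mulVec_add [DecidableEq o] {m R : Type*} [Fintype m]
    [CommSemiring R] (A₁₁ : Matrix n n R) (B₁ : Matrix n m R) (B₂ : Matrix o m R)
    (C₁ : Matrix m n R) (C₂ : Matrix m o R) (x : n ⊕ o → R) (u : m → R) :
    (fromBlocks A₁₁ 0 0 1 + fromRows B₁ B₂ * fromCols C₁ C₂) *ᵥ x + fromRows B₁ B₂ *ᵥ u =
      Sum.elim (A₁₁ *ᵥ (x ∘ Sum.inl) + B₁ *ᵥ (fromCols C₁ C₂ *ᵥ x + u))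
        (x ∘ Sum.inr + B₂ *ᵥ (fromCols C₁ C₂ *ᵥ x + u)) := by
  rw [add_mulVec, ← mulVec_mulVec, add_assoc, ← mulVec_add, fromBlocks_mulVec, fromRows_mulVec]
  ext (i | i) <;> simp

end Blocks

section ReducedKYP

variable {r q m : ℕ} (A11 : Matrix (Fin r) (Fin r) ℝ) (B1 : Matrix (Fin r) (Fin m) ℝ)
  (B2 : Matrix (Fin q) (Fin m) ℝ) (C1 : Matrix (Fin m) (Fin r) ℝ) (C2 : Matrix (Fin m) (Fin q) ℝ)
  {X11 : Matrix (Fin r) (Fin r) ℝ}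

theorem redKYPgen_isHermitian (hX11 : X11ᵀ = X11) :
    (redKYPgen A11 B1 B2 C1 C2 X11).IsHermitian := by
  rw [IsHermitian, conjTranspose_eq_transpose_of_trivial, redKYPgen, fromBlocks_transpose]
  congr 1 <;>
    simp only [transpose_sub, transpose_add, transpose_neg, transpose_mul, transpose_transpose,
      transpose_smul, hX11, Matrix.mul_assoc] <;>
    abel

theorem sumElim_dotProduct_redKYPgen_mulVec (hX11 : X11ᵀ = X11) (x1 : Fin r → ℝ)
    (v : Fin m → ℝ) :
    Sum.elim x1 v ⬝ᵥ (redKYPgen A11 B1 B2 C1 C2 X11 *ᵥ Sum.elim x1 v) =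
      2 * ((v - (C1 *ᵥ x1 - C2 *ᵥ (B2 *ᵥ v))) ⬝ᵥ (C1 *ᵥ x1 - C2 *ᵥ (B2 *ᵥ v))
        - (X11 *ᵥ x1) ⬝ᵥ (A11 *ᵥ x1 + B1 *ᵥ v)) := by
  have hX11_dot : ∀ y, x1 ⬝ᵥ (X11 *ᵥ y) = (X11 *ᵥ x1) ⬝ᵥ y := fun y => by
    conv_lhs => rw [← hX11]
    rw [dotProduct_transpose_mulVec, dotProduct_comm]
  simp only [redKYPgen, fromBlocks_mulVec, Sum.elim_comp_inl, Sum.elim_comp_inr,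
    sumElim_dotProduct_sumElim, sub_mulVec, add_mulVec, neg_mulVec, smul_mulVec,
    ← mulVec_mulVec, dotProduct_add, dotProduct_sub, dotProduct_neg, dotProduct_smul,
    sub_dotProduct, smul_eq_mul, dotProduct_transpose_mulVec, hX11_dot]
  simp only [mulVec_transpose, ← dotProduct_mulVec]
  ring

theorem kypForm_fromBlocks_eq (hX11 : X11ᵀ = X11) (X21 : Matrix (Fin q) (Fin r) ℝ)
    (X22 : Matrix (Fin q) (Fin q) ℝ) (x : Fin r ⊕ Fin q → ℝ) (u : Fin m → ℝ)
    (hx : x ∘ Sum.inr + B2 *ᵥ (fromCols C1 C2 *ᵥ x + u) = 0) :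
    2 * (u ⬝ᵥ (fromCols C1 C2 *ᵥ x) - (fromBlocks X11 0 X21 X22 *ᵥ x) ⬝ᵥ
        ((fromBlocks A11 0 0 1 + fromRows B1 B2 * fromCols C1 C2) *ᵥ x + fromRows B1 B2 *ᵥ u)) =
      Sum.elim (x ∘ Sum.inl) (fromCols C1 C2 *ᵥ x + u) ⬝ᵥ
        (redKYPgen A11 B1 B2 C1 C2 X11 *ᵥ Sum.elim (x ∘ Sum.inl) (fromCols C1 C2 *ᵥ x + u)) := by
  set v := fromCols C1 C2 *ᵥ x + u
  have hx₂ : x ∘ Sum.inr = -(B2 *ᵥ v) := eq_neg_of_add_eq_zero_left hx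
  have hCx : fromCols C1 C2 *ᵥ x = C1 *ᵥ (x ∘ Sum.inl) - C2 *ᵥ (B2 *ᵥ v) := by
    rw [← Sum.elim_comp_inl_inr x, fromCols_mulVec_sumElim, Sum.elim_comp_inl_inr, hx₂,
      mulVec_neg, sub_eq_add_neg]
  have hu : u = v - fromCols C1 C2 *ᵥ x := by simp only [v, add_sub_cancel_left]
  rw [sumElim_dotProduct_redKYPgen_mulVec A11 B1 B2 C1 C2 hX11,
    fromBlocks_add_fromRows_mul_fromCols_mulVec_add, hx, fromBlocks_mulVec, hu, ← hCx,
    sumElim_dotProduct_sumElim]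
  simp

theorem kypSolution_fromBlocks_iff (X12 : Matrix (Fin r) (Fin q) ℝ)
    (X21 : Matrix (Fin q) (Fin r) ℝ) (X22 : Matrix (Fin q) (Fin q) ℝ) :
    KYPSolution (fromBlocks 1 0 0 0) (fromBlocks A11 0 0 1 + fromRows B1 B2 * fromCols C1 C2)
        (fromRows B1 B2) (fromCols C1 C2) (fromBlocks X11 X12 X21 X22) ↔
      X11ᵀ = X11 ∧ X12 = 0 ∧ (redKYPgen A11 B1 B2 C1 C2 X11).PosSemidef := by
  rw [kypSolution_iff, fromBlocks_one_zero_transpose_mul_comm_iff, and_assoc]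
  refine and_congr_right fun hX11 => and_congr_right fun hX12 => ?_
  subst hX12
  rw [posSemidef_iff_dotProduct_mulVec,
    and_iff_right (redKYPgen_isHermitian A11 B1 B2 C1 C2 hX11)]
  constructor
  · intro h z
    set x : Fin r ⊕ Fin q → ℝ := Sum.elim (z ∘ Sum.inl) (-(B2 *ᵥ (z ∘ Sum.inr)))
    set u := z ∘ Sum.inr - fromCols C1 C2 *ᵥ x
    have hv : fromCols C1 C2 *ᵥ x + u = z ∘ Sum.inr := add_sub_cancel _ _
    have hx : x ∘ Sum.inr + B2 *ᵥ (fromCols C1 C2 *ᵥ x + u) = 0 := by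
      rw [hv, Sum.elim_comp_inr, neg_add_cancel]
    have hle := h x u <| by
      rwa [mem_range_fromBlocks_one_zero_iff, fromBlocks_add_fromRows_mul_fromCols_mulVec_add,
        Sum.elim_comp_inr]
    have hform := kypForm_fromBlocks_eq A11 B1 B2 C1 C2 hX11 X21 X22 x u hx
    rw [hv, Sum.elim_comp_inl, Sum.elim_comp_inl_inr] at hform
    rw [star_trivial, ← hform]
    linarith
  · intro h x u hmem
    rw [mem_range_fromBlocks_one_zero_iff, fromBlocks_add_fromRows_mul_fromCols_mulVec_add,
      Sum.elim_comp_inr] at hmem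
    have hnonneg := h (Sum.elim (x ∘ Sum.inl) (fromCols C1 C2 *ᵥ x + u))
    rw [star_trivial, ← kypForm_fromBlocks_eq A11 B1 B2 C1 C2 hX11 X21 X22 x u hmem] at hnonneg
    linarith

end ReducedKYP

theorem KYP_solution_correspondence_general
    {r q m : ℕ}
    (E : Matrix (Fin r ⊕ Fin q) (Fin r ⊕ Fin q) ℝ)
    (B : Matrix (Fin r ⊕ Fin q) (Fin m) ℝ)
    (A C_ : _)
    (S T : Matrix (Fin r ⊕ Fin q) (Fin r ⊕ Fin q) ℝ) (hS : IsUnit S) (hT : IsUnit T)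
    (hE : S * E * T⁻¹ = Matrix.fromBlocks (1 : Matrix (Fin r) (Fin r) ℝ) 0 0
      (0 : Matrix (Fin q) (Fin q) ℝ))
    (A11 : Matrix (Fin r) (Fin r) ℝ)
    (hWCF : S * (A - B * C_) * T⁻¹ =
      Matrix.fromBlocks A11 0 0 (1 : Matrix (Fin q) (Fin q) ℝ))
    (B1 : Matrix (Fin r) (Fin m) ℝ) (B2 : Matrix (Fin q) (Fin m) ℝ)
    (hB : S * B = Matrix.fromRows B1 B2)
    (C1 : Matrix (Fin m) (Fin r) ℝ) (C2 : Matrix (Fin m) (Fin q) ℝ)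
    (hCt : C_ * T⁻¹ = Matrix.fromCols C1 C2) :
    -- (1): from solutions of the original KYP LMI to the reduced one
    (∀ X : Matrix (Fin r ⊕ Fin q) (Fin r ⊕ Fin q) ℝ, KYPSolution E A B C_ X →
      (Matrix.fromCols (1 : Matrix (Fin r) (Fin r) ℝ) (0 : Matrix (Fin r) (Fin q) ℝ)
          * ((S⁻¹)ᵀ * X * T⁻¹)
          * Matrix.fromRows (1 : Matrix (Fin r) (Fin r) ℝ) (0 : Matrix (Fin q) (Fin r) ℝ))ᵀ
        = Matrix.fromCols (1 : Matrix (Fin r) (Fin r) ℝ) (0 : Matrix (Fin r) (Fin q) ℝ)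
          * ((S⁻¹)ᵀ * X * T⁻¹)
          * Matrix.fromRows (1 : Matrix (Fin r) (Fin r) ℝ) (0 : Matrix (Fin q) (Fin r) ℝ) ∧
      (redKYPgen A11 B1 B2 C1 C2
        (Matrix.fromCols (1 : Matrix (Fin r) (Fin r) ℝ) (0 : Matrix (Fin r) (Fin q) ℝ)
          * ((S⁻¹)ᵀ * X * T⁻¹)
          * Matrix.fromRows (1 : Matrix (Fin r) (Fin r) ℝ)
            (0 : Matrix (Fin q) (Fin r) ℝ))).PosSemidef) ∧
    -- (2): from symmetric solutions of the reduced KYP LMI to the original one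
    (∀ X11 : Matrix (Fin r) (Fin r) ℝ, X11ᵀ = X11 →
      (redKYPgen A11 B1 B2 C1 C2 X11).PosSemidef →
      ∀ (X21 : Matrix (Fin q) (Fin r) ℝ) (X22 : Matrix (Fin q) (Fin q) ℝ),
        KYPSolution E A B C_ (Sᵀ * Matrix.fromBlocks X11 0 X21 X22 * T)) := by
  have hAt : S * A * T⁻¹ = fromBlocks A11 0 0 1 + fromRows B1 B2 * fromCols C1 C2 := by
    rw [← hWCF, ← hB, ← hCt]
    simp only [Matrix.mul_sub, Matrix.sub_mul, Matrix.mul_assoc]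
    abel
  have hsys : ∀ X, KYPSolution E A B C_ X ↔ KYPSolution (fromBlocks 1 0 0 0)
      (fromBlocks A11 0 0 1 + fromRows B1 B2 * fromCols C1 C2) (fromRows B1 B2) (fromCols C1 C2)
      (S⁻¹ᵀ * X * T⁻¹) := fun X => by
    rw [← hE, ← hAt, ← hB, ← hCt, kypSolution_conj_iff hS hT]
  refine ⟨fun X hX => ?_, fun X11 hX11 hpsd X21 X22 => ?_⟩
  · rw [hsys, ← fromBlocks_toBlocks (S⁻¹ᵀ * X * T⁻¹), kypSolution_fromBlocks_iff] at hX
    rw [fromCols_one_zero_mul_mul_fromRows_one_zero]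
    exact ⟨hX.1, hX.2.2⟩
  · have hSt : IsUnit Sᵀ.det := by rwa [det_transpose, ← isUnit_iff_isUnit_det]
    have hX : S⁻¹ᵀ * (Sᵀ * fromBlocks X11 0 X21 X22 * T) * T⁻¹ = fromBlocks X11 0 X21 X22 := by
      rw [transpose_nonsing_inv, Matrix.mul_assoc,
        mul_nonsing_inv_cancel_right _ _ ((isUnit_iff_isUnit_det T).1 hT),
        nonsing_inv_mul_cancel_left _ _ hSt]
    rw [hsys, hX, kypSolution_fromBlocks_iff]
    exact ⟨hX11, rfl, hpsd⟩

/-- (correspondence of solutions of the original and the reduced KYP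
LMIs; special case of Proposition 3.2.2 b) in Voigt's thesis). -/
theorem KYP_solution_correspondence
    {r q m : ℕ}
    (E J R Q : Matrix (Fin r ⊕ Fin q) (Fin r ⊕ Fin q) ℝ)
    (B : Matrix (Fin r ⊕ Fin q) (Fin m) ℝ)
    (A C_ : _) (hA : A = (J - R) * Q) (hC : C_ = Bᵀ * Q)
    (hJ : Jᵀ = -J) (hRpsd : R.PosSemidef) (hEQ : (Eᵀ * Q).PosSemidef)
    (hreg : PencilRegular E A)
    (hstab : StronglyStabilizable E A B)
    (hdet : StronglyDetectable E A C_)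
    (hQ : IsUnit Q)
    (S T : Matrix (Fin r ⊕ Fin q) (Fin r ⊕ Fin q) ℝ) (hS : IsUnit S) (hT : IsUnit T)
    (hE : S * E * T⁻¹ = Matrix.fromBlocks (1 : Matrix (Fin r) (Fin r) ℝ) 0 0
      (0 : Matrix (Fin q) (Fin q) ℝ))
    (A11 : Matrix (Fin r) (Fin r) ℝ)
    (hWCF : S * (A - B * C_) * T⁻¹ =
      Matrix.fromBlocks A11 0 0 (1 : Matrix (Fin q) (Fin q) ℝ))
    (B1 : Matrix (Fin r) (Fin m) ℝ) (B2 : Matrix (Fin q) (Fin m) ℝ)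
    (hB : S * B = Matrix.fromRows B1 B2)
    (C1 : Matrix (Fin m) (Fin r) ℝ) (C2 : Matrix (Fin m) (Fin q) ℝ)
    (hCt : C_ * T⁻¹ = Matrix.fromCols C1 C2) :
    -- (1): from solutions of the original KYP LMI to the reduced one
    (∀ X : Matrix (Fin r ⊕ Fin q) (Fin r ⊕ Fin q) ℝ, KYPSolution E A B C_ X →
      (Matrix.fromCols (1 : Matrix (Fin r) (Fin r) ℝ) (0 : Matrix (Fin r) (Fin q) ℝ)
          * ((S⁻¹)ᵀ * X * T⁻¹)
          * Matrix.fromRows (1 : Matrix (Fin r) (Fin r) ℝ) (0 : Matrix (Fin q) (Fin r) ℝ))ᵀ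
        = Matrix.fromCols (1 : Matrix (Fin r) (Fin r) ℝ) (0 : Matrix (Fin r) (Fin q) ℝ)
          * ((S⁻¹)ᵀ * X * T⁻¹)
          * Matrix.fromRows (1 : Matrix (Fin r) (Fin r) ℝ) (0 : Matrix (Fin q) (Fin r) ℝ) ∧
      (redKYPgen A11 B1 B2 C1 C2
        (Matrix.fromCols (1 : Matrix (Fin r) (Fin r) ℝ) (0 : Matrix (Fin r) (Fin q) ℝ)
          * ((S⁻¹)ᵀ * X * T⁻¹)
          * Matrix.fromRows (1 : Matrix (Fin r) (Fin r) ℝ)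
            (0 : Matrix (Fin q) (Fin r) ℝ))).PosSemidef) ∧
    -- (2): from symmetric solutions of the reduced KYP LMI to the original one
    (∀ X11 : Matrix (Fin r) (Fin r) ℝ, X11ᵀ = X11 →
      (redKYPgen A11 B1 B2 C1 C2 X11).PosSemidef →
      ∀ (X21 : Matrix (Fin q) (Fin r) ℝ) (X22 : Matrix (Fin q) (Fin q) ℝ),
        KYPSolution E A B C_ (Sᵀ * Matrix.fromBlocks X11 0 X21 X22 * T)) :=
  KYP_solution_correspondence_general E B A C_ S T hS hT hE A11 hWCF B1 B2 hB C1 C2 hCt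
end
end

section
/- Let E, J, R, Q ∈ ℝ^{n×n} and B ∈ ℝ^{n×m} define a port-Hamiltonian descriptor system (Jᵀ = −J, R = Rᵀ positive semidefinite, EᵀQ = QᵀE positive semidefinite), with A := (J−R)Q and C := BᵀQ. Suppose 𝒫c ∈ ℝ^{n×n} satisfies the control GARE Aᵀ𝒫c + 𝒫cᵀA − 𝒫cᵀBBᵀ𝒫c + CᵀC = 0 and 𝒫f ∈ ℝ^{n×n} satisfies the modified filter GARE A𝒫fᵀ + 𝒫fAᵀ − 𝒫fCᵀC𝒫fᵀ + BBᵀ + 2R = 0. Then, with A_Pf := A − 𝒫fCᵀC, one has the identity (I_n + 𝒫fᵀ𝒫c)ᵀA_Pfᵀ𝒫c + 𝒫cᵀA_Pf(I_n + 𝒫fᵀ𝒫c) = −2𝒫cᵀR𝒫c − (I_n + 𝒫fᵀ𝒫c)ᵀCᵀC(I_n + 𝒫fᵀ𝒫c); in particular, (I_n + 𝒫fᵀ𝒫c)ᵀA_Pfᵀ𝒫c + 𝒫cᵀA_Pf(I_n + 𝒫fᵀ𝒫c) ⪯ −2𝒫cᵀR𝒫c ⪯ 0. -/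
open Matrix

noncomputable section

section Systems

variable {n m p : Type*} [Fintype n] [DecidableEq n] [Fintype m] [Fintype p]

/-! Expanding the products, the difference of the two sides of the Lyapunov identity is the
residual of the control Riccati equation plus `Pcᵀ (residual of the filter Riccati equation) Pc`,
so it vanishes. The two inequalities then only say that `(C (I + Pfᵀ Pc))ᵀ (C (I + Pfᵀ Pc))` and
`Pcᵀ R Pc` are positive semidefinite. -/

theorem Matrix.PosSemidef.transpose_mul_mul_same {n m α : Type*} [Fintype n] [Finite m]
    [CommRing α] [PartialOrder α] [StarRing α] [TrivialStar α]
    {S : Matrix n n α} (hS : S.PosSemidef) (M : Matrix n m α) : (Mᵀ * S * M).PosSemidef := by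
  simpa only [conjTranspose_eq_transpose_of_trivial] using hS.conjTranspose_mul_mul_same M

section Riccati

variable {n m p α : Type*} [Fintype n] [DecidableEq n] [Fintype m] [Fintype p] [CommRing α]

theorem lyapunov_defect_eq_riccati_residuals (A R Pc Pf : Matrix n n α) (B : Matrix n m α)
    (C : Matrix p n α) :
    (1 + Pfᵀ * Pc)ᵀ * (A - Pf * Cᵀ * C)ᵀ * Pc + Pcᵀ * (A - Pf * Cᵀ * C) * (1 + Pfᵀ * Pc)
        - (-((2 : α) • (Pcᵀ * R * Pc)) - (1 + Pfᵀ * Pc)ᵀ * Cᵀ * C * (1 + Pfᵀ * Pc))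
      = (Aᵀ * Pc + Pcᵀ * A - Pcᵀ * B * Bᵀ * Pc + Cᵀ * C)
        + Pcᵀ * (A * Pfᵀ + Pf * Aᵀ - Pf * Cᵀ * C * Pfᵀ + B * Bᵀ + (2 : α) • R) * Pc := by
  simp only [transpose_add, transpose_one, transpose_mul, transpose_sub, transpose_transpose,
    Matrix.add_mul, Matrix.mul_add, Matrix.sub_mul, Matrix.mul_sub, Matrix.one_mul,
    Matrix.mul_one, Matrix.mul_smul, Matrix.smul_mul, Matrix.mul_assoc]
  abel

theorem lyapunov_identity_of_riccati {A R Pc Pf : Matrix n n α} {B : Matrix n m α}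
    {C : Matrix p n α}
    (hPc : Aᵀ * Pc + Pcᵀ * A - Pcᵀ * B * Bᵀ * Pc + Cᵀ * C = 0)
    (hPf : A * Pfᵀ + Pf * Aᵀ - Pf * Cᵀ * C * Pfᵀ + B * Bᵀ + (2 : α) • R = 0) :
    (1 + Pfᵀ * Pc)ᵀ * (A - Pf * Cᵀ * C)ᵀ * Pc + Pcᵀ * (A - Pf * Cᵀ * C) * (1 + Pfᵀ * Pc)
      = -((2 : α) • (Pcᵀ * R * Pc)) - (1 + Pfᵀ * Pc)ᵀ * Cᵀ * C * (1 + Pfᵀ * Pc) := by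
  rw [← sub_eq_zero, lyapunov_defect_eq_riccati_residuals A R Pc Pf B C, hPc, hPf,
    Matrix.mul_zero, Matrix.zero_mul, add_zero]

end Riccati

theorem filter_feedback_lyapunov_identity_general
    {n m : ℕ} (R Q : Matrix (Fin n) (Fin n) ℝ) (B : Matrix (Fin n) (Fin m) ℝ)
    (A C_ : _) (hC : C_ = Bᵀ * Q)
    (hR : R.PosSemidef)
    (Pc Pf : Matrix (Fin n) (Fin n) ℝ)
    (hPc : Aᵀ * Pc + Pcᵀ * A - Pcᵀ * B * Bᵀ * Pc + C_ᵀ * C_ = 0)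
    (hPf : A * Pfᵀ + Pf * Aᵀ - Pf * C_ᵀ * C_ * Pfᵀ + B * Bᵀ + (2 : ℝ) • R = 0)
    (APf : Matrix (Fin n) (Fin n) ℝ) (hAPf : APf = A - Pf * C_ᵀ * C_) :
    (1 + Pfᵀ * Pc)ᵀ * APfᵀ * Pc + Pcᵀ * APf * (1 + Pfᵀ * Pc)
        = -((2 : ℝ) • (Pcᵀ * R * Pc))
          - (1 + Pfᵀ * Pc)ᵀ * C_ᵀ * C_ * (1 + Pfᵀ * Pc) ∧
    (-((2 : ℝ) • (Pcᵀ * R * Pc))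
        - ((1 + Pfᵀ * Pc)ᵀ * APfᵀ * Pc + Pcᵀ * APf * (1 + Pfᵀ * Pc))).PosSemidef ∧
    ((2 : ℝ) • (Pcᵀ * R * Pc)).PosSemidef := by
  subst hAPf
  have hid := lyapunov_identity_of_riccati hPc hPf
  refine ⟨hid, ?_, (hR.transpose_mul_mul_same Pc).smul zero_le_two⟩
  rw [hid, sub_sub_cancel, Matrix.mul_assoc _ C_ᵀ]
  exact (posSemidef_conjTranspose_mul_self C_).transpose_mul_mul_same _

/-- the Lyapunov identity from the proof of Theorem `thm:err_bnd`:
for solutions of the control GARE and the modified filter GARE one has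
`(I + 𝒫fᵀ𝒫c)ᵀ A_Pfᵀ 𝒫c + 𝒫cᵀ A_Pf (I + 𝒫fᵀ𝒫c)
  = −2𝒫cᵀR𝒫c − (I + 𝒫fᵀ𝒫c)ᵀCᵀC(I + 𝒫fᵀ𝒫c) ⪯ −2𝒫cᵀR𝒫c ⪯ 0`. -/
theorem filter_feedback_lyapunov_identity
    {n m : ℕ} (E J R Q : Matrix (Fin n) (Fin n) ℝ) (B : Matrix (Fin n) (Fin m) ℝ)
    (A C_ : _) (hA : A = (J - R) * Q) (hC : C_ = Bᵀ * Q)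
    (hJ : Jᵀ = -J) (hR : R.PosSemidef) (hEQ : (Eᵀ * Q).PosSemidef)
    (Pc Pf : Matrix (Fin n) (Fin n) ℝ)
    (hPc : Aᵀ * Pc + Pcᵀ * A - Pcᵀ * B * Bᵀ * Pc + C_ᵀ * C_ = 0)
    (hPf : A * Pfᵀ + Pf * Aᵀ - Pf * C_ᵀ * C_ * Pfᵀ + B * Bᵀ + (2 : ℝ) • R = 0)
    (APf : Matrix (Fin n) (Fin n) ℝ) (hAPf : APf = A - Pf * C_ᵀ * C_) :
    (1 + Pfᵀ * Pc)ᵀ * APfᵀ * Pc + Pcᵀ * APf * (1 + Pfᵀ * Pc)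
        = -((2 : ℝ) • (Pcᵀ * R * Pc))
          - (1 + Pfᵀ * Pc)ᵀ * C_ᵀ * C_ * (1 + Pfᵀ * Pc) ∧
    (-((2 : ℝ) • (Pcᵀ * R * Pc))
        - ((1 + Pfᵀ * Pc)ᵀ * APfᵀ * Pc + Pcᵀ * APf * (1 + Pfᵀ * Pc))).PosSemidef ∧
    ((2 : ℝ) • (Pcᵀ * R * Pc)).PosSemidef :=
  filter_feedback_lyapunov_identity_general R Q B A C_ hC hR Pc Pf hPc hPf APf hAPf
end Systems
end
end
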